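/- arXiv:2210.10158 — 8 statements merged into one kernel-verified Lean document; each statement's English description precedes it below -/
import Mathlib

section
/- Let E be a finite-dimensional real inner product space and let α_1, …, α_r be a basis of E. Define the coroots α_i^∨ = (2/⟨α_i,α_i⟩)·α_i and let ω_1, …, ω_r ∈ E be the dual family characterized by ⟨ω_i, α_j^∨⟩ = δ_{ij} for all i, j. Let S ⊆ {1,…,r}, let E′ = span{α_i : i ∈ S}, and let p : E → E′ be the orthogonal projection onto E′. Then p(ω_i) = 0 for every i ∉ S, and for every i ∈ S one has ⟨p(ω_i), α_j^∨⟩ = δ_{ij} for all j ∈ S; that is, {p(ω_i) : i ∈ S} is the dual family in E′ to the coroots {α_j^∨ : j ∈ S}. -/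
/-!
Since each coroot is a nonzero multiple of its root, `⟪ω i, α j⟫ = 0` for `i ≠ j`; so for `i ∉ S`
the weight `ω i` is orthogonal to `E'` and projects to `0`. For `i ∈ S`, the defect `ω i - p (ω i)`
is orthogonal to `E'`, which contains the coroots `coroot j` with `j ∈ S`, so pairing with them
does not see the projection.
-/

open scoped RealInnerProductSpace

namespace Submodule

variable {𝕜 E : Type*} [RCLike 𝕜] [NormedAddCommGroup E] [InnerProductSpace 𝕜 E]

theorem mem_orthogonal_span_iff {s : Set E} {v : E} :
    v ∈ (span 𝕜 s)ᗮ ↔ ∀ u ∈ s, inner 𝕜 v u = 0 := by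
  rw [← span_singleton_le_iff_mem, ← isOrtho_iff_le, isOrtho_span]
  simp only [Set.mem_singleton_iff, forall_eq]

end Submodule

theorem real_inner_smul_right_eq_zero_iff {E : Type*} [NormedAddCommGroup E]
    [InnerProductSpace ℝ E] {c : ℝ} (hc : c ≠ 0) {x a : E} : ⟪x, c • a⟫ = 0 ↔ ⟪x, a⟫ = 0 := by
  rw [real_inner_smul_right, mul_eq_zero, or_iff_right hc]

theorem projection_of_fundamental_weights_general
    {E : Type*} [NormedAddCommGroup E] [InnerProductSpace ℝ E] [FiniteDimensional ℝ E]
    {r : ℕ} (α : Fin r → E)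
    (hind : LinearIndependent ℝ α)
    (coroot : Fin r → E) (hcoroot : ∀ i, coroot i = (2 / ⟪α i, α i⟫) • α i)
    (ω : Fin r → E) (hω : ∀ i j, ⟪ω i, coroot j⟫ = if i = j then 1 else 0)
    (S : Set (Fin r)) (E' : Submodule ℝ E) (hE' : E' = Submodule.span ℝ (α '' S))
    (p : E → E) (hp : ∀ v, p v = (Submodule.orthogonalProjectionOnto E' v : E)) :
    (∀ i, i ∉ S → p (ω i) = 0) ∧
      (∀ i ∈ S, ∀ j ∈ S, ⟪p (ω i), coroot j⟫ = if i = j then 1 else 0) := by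
  have hωα : ∀ i j, i ≠ j → ⟪ω i, α j⟫ = 0 := fun i j hij =>
    (real_inner_smul_right_eq_zero_iff
      (div_ne_zero two_ne_zero (inner_self_ne_zero.2 (hind.ne_zero j)))).1
      (by rw [← hcoroot, hω, if_neg hij])
  refine ⟨fun i hi => ?_, fun i _ j hj => ?_⟩
  · have hωE' : ω i ∈ E'ᗮ := by
      rw [hE', Submodule.mem_orthogonal_span_iff]
      rintro _ ⟨j, hj, rfl⟩
      exact hωα i j (ne_of_mem_of_not_mem hj hi).symm
    rw [hp, Submodule.orthogonalProjectionOnto_eq_zero_iff.2 hωE', Submodule.coe_zero]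
  · have hcorootE' : coroot j ∈ E' := by
      rw [hE', hcoroot]
      exact Submodule.smul_mem _ _ (Submodule.subset_span (Set.mem_image_of_mem α hj))
    rw [hp, ← hω]
    exact Submodule.inner_orthogonalProjectionOnto_eq_of_mem_right ⟨_, hcorootE'⟩ (ω i)

/-- **Projection of fundamental weights onto a root subsystem.**
Let `E` be a finite-dimensional real inner product space, `α 1, …, α r` a basis of `E`,
`coroot i = (2 / ⟪α i, α i⟫) • α i` the coroots, and `ω 1, …, ω r` the dual family to the
coroots, i.e. `⟪ω i, coroot j⟫ = δ_{ij}`.  For `S ⊆ {1, …, r}`, let `E'` be the span of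
`{α i : i ∈ S}` and `p` the orthogonal projection onto `E'`.  Then `p (ω i) = 0` for `i ∉ S`,
and `{p (ω i) : i ∈ S}` is dual in `E'` to the coroots `{coroot j : j ∈ S}`. -/
theorem projection_of_fundamental_weights
    {E : Type*} [NormedAddCommGroup E] [InnerProductSpace ℝ E] [FiniteDimensional ℝ E]
    {r : ℕ} (α : Fin r → E)
    (hind : LinearIndependent ℝ α) (hspan : Submodule.span ℝ (Set.range α) = ⊤)
    (coroot : Fin r → E) (hcoroot : ∀ i, coroot i = (2 / ⟪α i, α i⟫) • α i)
    (ω : Fin r → E) (hω : ∀ i j, ⟪ω i, coroot j⟫ = if i = j then 1 else 0)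
    (S : Set (Fin r)) (E' : Submodule ℝ E) (hE' : E' = Submodule.span ℝ (α '' S))
    (p : E → E) (hp : ∀ v, p v = (Submodule.orthogonalProjectionOnto E' v : E)) :
    (∀ i, i ∉ S → p (ω i) = 0) ∧
      (∀ i ∈ S, ∀ j ∈ S, ⟪p (ω i), coroot j⟫ = if i = j then 1 else 0) :=
  projection_of_fundamental_weights_general α hind coroot hcoroot ω hω S E' hE' p hp
end

section
/- Let V be a real vector space, let m ≥ 1, and let Φ_1, …, Φ_m be pairwise disjoint finite subsets of V such that the family of subspaces (span Φ_k)_{k=1}^m is linearly independent (i.e. their sum is an internal direct sum). Let Φ = Φ_1 ∪ … ∪ Φ_m and let v_k ∈ span Φ_k for each k. Then the restriction map F ↦ (F|_{Φ_1}, …, F|_{Φ_m}) is a bijection from the set {F : Φ → ℕ : Σ_{α∈Φ} F(α)·α = v_1 + … + v_m} onto the product Π_{k=1}^m {G : Φ_k → ℕ : Σ_{α∈Φ_k} G(α)·α = v_k}. In particular, the partition count #{F : Φ → ℕ : Σ_α F(α)α = Σ_k v_k} equals the product over k of #{G : Φ_k → ℕ : Σ_α G(α)α = v_k}. -/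
/-!
Since the pieces `Φ k` are disjoint, a function on their union is the same as a family of
functions on the pieces, and its weighted sum `∑ F a • a` splits into the weighted sums over the
pieces, the `k`-th of which lies in `span Φ k`. Independence of the spans makes a decomposition
`∑ k, w k` with `w k ∈ span Φ k` unique, so the whole sum equals `∑ k, v k` exactly when the
`k`-th partial sum equals `v k` for every `k`.
-/

open Finset Function

namespace Finset

variable {ι α : Type*} [Fintype ι] [DecidableEq α] (Φ : ι → Finset α)

def sigmaToBiUnion (x : Σ k, Φ k) : ↥(univ.biUnion Φ) :=
  ⟨x.2, mem_biUnion.mpr ⟨x.1, mem_univ _, x.2.2⟩⟩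

variable {Φ}

theorem sigmaToBiUnion_bijective (hΦ : Pairwise (Disjoint on Φ)) :
    Bijective (sigmaToBiUnion Φ) := by
  refine ⟨?_, fun a => ?_⟩
  · rintro ⟨k, a, ha⟩ ⟨l, b, hb⟩ hab
    obtain rfl : a = b := congrArg Subtype.val hab
    obtain rfl : k = l := by
      by_contra hkl
      exact disjoint_left.mp (hΦ hkl) ha hb
    rfl
  · obtain ⟨k, -, hk⟩ := mem_biUnion.mp a.2
    exact ⟨⟨k, ⟨a, hk⟩⟩, rfl⟩

theorem sum_univ_biUnion_eq_sum_sum {M : Type*} [AddCommMonoid M] (hΦ : Pairwise (Disjoint on Φ))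
    (f : ↥(univ.biUnion Φ) → M) :
    ∑ a, f a = ∑ k, ∑ a : Φ k, f (sigmaToBiUnion Φ ⟨k, a⟩) :=
  (Fintype.sum_bijective _ (sigmaToBiUnion_bijective hΦ) _ _ fun _ => rfl).symm.trans
    (Fintype.sum_sigma _)

theorem bijective_restrict_biUnion {β : Type*} (hΦ : Pairwise (Disjoint on Φ)) :
    Bijective fun (F : ↥(univ.biUnion Φ) → β) (k : ι) (a : Φ k) => F (sigmaToBiUnion Φ ⟨k, a⟩) :=
  (Equiv.piCurry fun k (_ : Φ k) => β).bijective.comp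
    ((Equiv.ofBijective _ (sigmaToBiUnion_bijective hΦ)).symm.arrowCongr (Equiv.refl β)).bijective

end Finset

theorem iSupIndep.sum_eq_sum_iff {ι R N : Type*} [Fintype ι] [Ring R] [AddCommGroup N] [Module R N]
    {p : ι → Submodule R N} (hp : iSupIndep p) {w w' : ι → N} (hw : ∀ i, w i ∈ p i)
    (hw' : ∀ i, w' i ∈ p i) : ∑ i, w i = ∑ i, w' i ↔ w = w' := by
  refine ⟨fun h => funext fun i => sub_eq_zero.mp ?_, fun h => h ▸ rfl⟩
  refine (iSupIndep_iff_finsetSum_eq_zero_imp_eq_zero p).mp hp univ (w - w')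
    (fun i _ => sub_mem (hw i) (hw' i)) ?_ i (mem_univ i)
  simp [sum_sub_distrib, h]

theorem Set.ncard_univ_pi {ι : Type*} [Fintype ι] {β : ι → Type*} (s : ∀ i, Set (β i)) :
    (Set.univ.pi s).ncard = ∏ i, (s i).ncard := by
  simp_rw [← Nat.card_coe_set_eq, Nat.card_congr (Equiv.Set.univPi s), Nat.card_pi]

theorem kostant_partition_count_factors_general
    {V : Type*} [AddCommGroup V] [Module ℝ V] [DecidableEq V]
    {m : ℕ} (Φ : Fin m → Finset V)
    (hdisj : ∀ k l, k ≠ l → Disjoint (Φ k) (Φ l))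
    (hindep : iSupIndep fun k => Submodule.span ℝ ((Φ k : Set V)))
    (v : Fin m → V) (hv : ∀ k, v k ∈ Submodule.span ℝ ((Φ k : Set V))) :
    Set.BijOn
      (fun (F : ↥(Finset.univ.biUnion Φ) → ℕ) (k : Fin m) (a : ↥(Φ k)) =>
        F ⟨a.1, Finset.mem_biUnion.mpr ⟨k, Finset.mem_univ k, a.2⟩⟩)
      {F : ↥(Finset.univ.biUnion Φ) → ℕ | ∑ a : ↥(Finset.univ.biUnion Φ), F a • (a : V) = ∑ k, v k}
      {G : (k : Fin m) → (↥(Φ k) → ℕ) | ∀ k, ∑ a : ↥(Φ k), G k a • (a : V) = v k} ∧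
    Set.ncard
        {F : ↥(Finset.univ.biUnion Φ) → ℕ |
          ∑ a : ↥(Finset.univ.biUnion Φ), F a • (a : V) = ∑ k, v k} =
      ∏ k, Set.ncard {G : ↥(Φ k) → ℕ | ∑ a : ↥(Φ k), G a • (a : V) = v k} := by
  have hΦ : Pairwise (Disjoint on Φ) := fun k l hkl => hdisj k l hkl
  have hspan (k : Fin m) (G : Φ k → ℕ) : ∑ a, G a • (a : V) ∈ Submodule.span ℝ (Φ k : Set V) :=
    Submodule.sum_mem _ fun a _ => nsmul_mem (Submodule.subset_span a.2) _
  have hsolutions :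
      {F : ↥(univ.biUnion Φ) → ℕ | ∑ a, F a • (a : V) = ∑ k, v k} =
        (fun F k a => F (sigmaToBiUnion Φ ⟨k, a⟩)) ⁻¹'
          {G : (k : Fin m) → (Φ k → ℕ) | ∀ k, ∑ a, G k a • (a : V) = v k} := by
    ext F
    change _ = _ ↔ ∀ k, _
    rw [sum_univ_biUnion_eq_sum_sum hΦ]
    exact (hindep.sum_eq_sum_iff (fun k => hspan k _) hv).trans funext_iff
  have hbij : Set.BijOn _ _ _ := hsolutions ▸ (bijective_restrict_biUnion hΦ).bijOn_preimage
  refine ⟨hbij, ?_⟩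
  rw [hbij.ncard_eq, ← Set.ncard_univ_pi]
  congr 1
  ext G
  exact Set.mem_univ_pi.symm

/-- **Factorization of Kostant-type partition counts over a direct-sum decomposition.**
Let `V` be a real vector space and `Φ 1, …, Φ m` pairwise disjoint finite subsets of `V`
whose spans form an independent family of subspaces.  Let `v k ∈ span (Φ k)` for each `k`.
Then restriction gives a bijection from
`{F : Φ → ℕ | ∑_{a ∈ Φ} F a • a = ∑ k, v k}` (where `Φ = ⋃ k, Φ k`) onto
`∏ k {G : Φ k → ℕ | ∑_{a ∈ Φ k} G a • a = v k}`; in particular the cardinalities satisfy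
the corresponding product formula. -/
theorem kostant_partition_count_factors
    {V : Type*} [AddCommGroup V] [Module ℝ V] [DecidableEq V]
    {m : ℕ} (hm : 1 ≤ m) (Φ : Fin m → Finset V)
    (hdisj : ∀ k l, k ≠ l → Disjoint (Φ k) (Φ l))
    (hindep : iSupIndep fun k => Submodule.span ℝ ((Φ k : Set V)))
    (v : Fin m → V) (hv : ∀ k, v k ∈ Submodule.span ℝ ((Φ k : Set V))) :
    Set.BijOn
      (fun (F : ↥(Finset.univ.biUnion Φ) → ℕ) (k : Fin m) (a : ↥(Φ k)) =>
        F ⟨a.1, Finset.mem_biUnion.mpr ⟨k, Finset.mem_univ k, a.2⟩⟩)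
      {F : ↥(Finset.univ.biUnion Φ) → ℕ | ∑ a : ↥(Finset.univ.biUnion Φ), F a • (a : V) = ∑ k, v k}
      {G : (k : Fin m) → (↥(Φ k) → ℕ) | ∀ k, ∑ a : ↥(Φ k), G k a • (a : V) = v k} ∧
    Set.ncard
        {F : ↥(Finset.univ.biUnion Φ) → ℕ |
          ∑ a : ↥(Finset.univ.biUnion Φ), F a • (a : V) = ∑ k, v k} =
      ∏ k, Set.ncard {G : ↥(Φ k) → ℕ | ∑ a : ↥(Φ k), G a • (a : V) = v k} :=
  kostant_partition_count_factors_general Φ hdisj hindep v hv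
end

section
/- Let r ≥ 1 and let λ = (λ_1,…,λ_r) ∈ ℝ^r satisfy λ_1 ≥ λ_2 ≥ … ≥ λ_r ≥ 0. Let S = {i ∈ {1,…,r−1} : λ_i = λ_{i+1}} ∪ {r : if λ_r = 0}, and let V = span_ℝ{α_i : i ∈ S} ⊆ ℝ^r, where α_i are the simple roots of type B_r. Then the affine dimension of the type B/C BZ-polytope BZ_λ ⊆ ℝ^{r²} equals r² − #{α ∈ Φ⁺(B_r) : α ∈ V}. -/
open scoped BigOperators

noncomputable section

/-- 1-based standard basis vector `e i` of `ℝ^r`. -/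
def stdVec (r i : ℕ) : Fin r → ℝ := fun k => if (k : ℕ) + 1 = i then 1 else 0

/-- Type B/C BZ inequalities. -/
def IsBZBC (r : ℕ) (x y : ℕ → ℕ → ℝ) : Prop :=
  (∀ i j, 1 ≤ i → i ≤ j → j ≤ r → y i j ≤ x i j) ∧
  (∀ i j, 1 ≤ i → i < j → j ≤ r → y i j ≤ x (i + 1) j) ∧
  (∀ i j, 1 ≤ i → i ≤ j → j + 1 ≤ r → x i (j + 1) ≤ y i j ∧ x (i + 1) (j + 1) ≤ y i j) ∧
  (∀ i, 1 ≤ i → i ≤ r → 0 ≤ y i r)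

def BZsetBC (r : ℕ) (lam : ℕ → ℝ) : Set ((ℕ → ℕ → ℝ) × (ℕ → ℕ → ℝ)) :=
  {p | (∀ j, 1 ≤ j → j ≤ r → p.1 1 j = lam j) ∧ IsBZBC r p.1 p.2 ∧
       (∀ i j, ¬(1 ≤ i ∧ i ≤ j ∧ j ≤ r) → p.1 i j = 0) ∧
       (∀ i j, ¬(1 ≤ i ∧ i ≤ j ∧ j ≤ r) → p.2 i j = 0)}

def wtBC (r : ℕ) (p : (ℕ → ℕ → ℝ) × (ℕ → ℕ → ℝ)) (i : ℕ) : ℝ :=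
  (∑ j ∈ Finset.Icc i r, p.1 i j) + (∑ j ∈ Finset.Icc (i + 1) r, p.1 (i + 1) j)
    - 2 * ∑ j ∈ Finset.Icc i r, p.2 i j

def IsBZD (r : ℕ) (x y : ℕ → ℕ → ℝ) : Prop :=
  (∀ i j, 1 ≤ i → i ≤ j → j + 1 ≤ r → y i j ≤ x i j) ∧
  (∀ i j, 1 ≤ i → i < j → j + 1 ≤ r → y i j ≤ x (i + 1) j) ∧
  (∀ i j, 1 ≤ i → i ≤ j → j + 1 ≤ r → x i (j + 1) ≤ y i j ∧ x (i + 1) (j + 1) ≤ y i j) ∧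
  (∀ i, 1 ≤ i → i + 2 ≤ r → y i (r - 1) ≤ x i r + x (i + 1) r + min (x i (r - 1)) (x (i + 1) (r - 1))) ∧
  (y (r - 1) (r - 1) ≤ x (r - 1) r + x r r + x (r - 1) (r - 1))

def BZsetD (r : ℕ) (lam : ℕ → ℝ) : Set ((ℕ → ℕ → ℝ) × (ℕ → ℕ → ℝ)) :=
  {p | (∀ j, 1 ≤ j → j ≤ r → p.1 1 j = lam j) ∧ IsBZD r p.1 p.2 ∧
       (∀ i j, ¬(1 ≤ i ∧ i ≤ j ∧ j ≤ r) → p.1 i j = 0) ∧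
       (∀ i j, ¬(1 ≤ i ∧ i ≤ j ∧ j + 1 ≤ r) → p.2 i j = 0)}

def wtD (r : ℕ) (p : (ℕ → ℕ → ℝ) × (ℕ → ℕ → ℝ)) (i : ℕ) : ℝ :=
  (∑ j ∈ Finset.Icc i r, p.1 i j) + (∑ j ∈ Finset.Icc (i + 1) r, p.1 (i + 1) j)
    - 2 * ∑ j ∈ Finset.Icc i (r - 1), p.2 i j

/-- Affine dimension of a subset of a real vector space. -/
def affDim {V : Type*} [AddCommGroup V] [Module ℝ V] (A : Set V) : ℕ :=
  Module.finrank ℝ (vectorSpan ℝ A)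

def simpleRootB (r i : ℕ) : Fin r → ℝ :=
  if i = r then stdVec r r else stdVec r i - stdVec r (i + 1)

def simpleRootC (r i : ℕ) : Fin r → ℝ :=
  if i = r then (2 : ℝ) • stdVec r r else stdVec r i - stdVec r (i + 1)

def simpleRootD (r i : ℕ) : Fin r → ℝ :=
  if i = r then stdVec r (r - 1) + stdVec r r else stdVec r i - stdVec r (i + 1)

def posRootsB (r : ℕ) : Set (Fin r → ℝ) :=
  {v | ∃ i j, 1 ≤ i ∧ i < j ∧ j ≤ r ∧ (v = stdVec r i - stdVec r j ∨ v = stdVec r i + stdVec r j)}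
    ∪ {v | ∃ i, 1 ≤ i ∧ i ≤ r ∧ v = stdVec r i}

def posRootsC (r : ℕ) : Set (Fin r → ℝ) :=
  {v | ∃ i j, 1 ≤ i ∧ i < j ∧ j ≤ r ∧ (v = stdVec r i - stdVec r j ∨ v = stdVec r i + stdVec r j)}
    ∪ {v | ∃ i, 1 ≤ i ∧ i ≤ r ∧ v = (2 : ℝ) • stdVec r i}

def posRootsD (r : ℕ) : Set (Fin r → ℝ) :=
  {v | ∃ i j, 1 ≤ i ∧ i < j ∧ j ≤ r ∧ (v = stdVec r i - stdVec r j ∨ v = stdVec r i + stdVec r j)}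

/-- `f` is a quasi-polynomial of degree exactly `d` on positive integers. -/
def IsQuasiPolyOfDegree (f : ℕ → ℕ) (d : ℕ) : Prop :=
  ∃ T : ℕ, 0 < T ∧ ∃ P : ℕ → Polynomial ℚ,
    (∀ k < T, (P k).degree = (d : ℕ)) ∧ ∀ N : ℕ, 0 < N → (f N : ℚ) = (P (N % T)).eval (N : ℚ)

end

/-!
Write `Λ` for `λ` indexed from `0` and padded with zeros; it is antitone. Each entry of a
pattern sits over a window `[a, b]` of indices (`x_{i,j}` over `[j - i, j + i - 2]`, `y_{i,j}`
over `[j - i, j + i - 1]`), and in every inequality `u ≤ v` of a pattern the window of `u` is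
that of `v` with one index added on the right or one removed on the left.

If `Λ` is constant on the window of an entry, that entry is pinned to this constant, by
induction down the rows. Otherwise it is free: averaging `Λ` over each window with binomial
weights gives a pattern satisfying every inequality with a margin of order the drop of `Λ`
across the smaller entry's window, so each free entry can be moved on its own. Hence the
dimension is the number of windows with a drop.

The windows `[a, b]` with `a < b` and `a + b < 2r` are in bijection with the positive roots of
`B_r`, and the root lies in `V` exactly when `Λ` is constant on the window; there are `r²` of
them.
-/

noncomputable section

theorem finrank_vectorSpan_eq_card_of_free {K ι : Type*} [Field K] [DecidableEq ι]
    {A : Set (ι → K)} {p₀ : ι → K} (s : Finset ι) (h₀ : p₀ ∈ A)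
    (hfix : ∀ p ∈ A, ∀ i ∉ s, p i = p₀ i)
    (hmove : ∀ i ∈ s, ∃ ε : K, ε ≠ 0 ∧ p₀ + ε • Pi.single i 1 ∈ A) :
    Module.finrank K (vectorSpan K A) = s.card := by
  let e : s → ι → K := fun i => Pi.single (i : ι) 1
  have hspan : vectorSpan K A = Submodule.span K (Set.range e) := by
    apply le_antisymm
    · rw [vectorSpan_def]
      refine Submodule.span_le.2 ?_
      rintro _ ⟨p, hp, q, hq, rfl⟩
      have hpq : p - q = ∑ i : s, (p i - q i) • e i := by
        funext j
        rw [Finset.sum_coe_sort s (fun i => (p i - q i) • Pi.single i (1 : K))]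
        simp only [Pi.sub_apply, Finset.sum_apply, Pi.smul_apply, Pi.single_apply,
          smul_eq_mul, mul_ite, mul_one, mul_zero, Finset.sum_ite_eq]
        split_ifs with hj
        · rfl
        · rw [hfix p hp j hj, hfix q hq j hj, sub_self]
      change p - q ∈ _
      rw [hpq]
      exact Submodule.sum_mem _ fun i _ => Submodule.smul_mem _ _ (Submodule.subset_span ⟨i, rfl⟩)
    · refine Submodule.span_le.2 ?_
      rintro _ ⟨i, rfl⟩
      obtain ⟨ε, hε, hA⟩ := hmove i i.2
      simpa [e, hε] using Submodule.smul_mem _ ε⁻¹ (vsub_mem_vectorSpan K hA h₀)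
  have hind : LinearIndependent K e :=
    (Pi.linearIndependent_single_one ι K).comp _ Subtype.val_injective
  rw [hspan, finrank_span_eq_card hind, Fintype.card_coe]

theorem affDim_image_linearEquiv {V W : Type*} [AddCommGroup V] [Module ℝ V] [AddCommGroup W]
    [Module ℝ W] (e : V ≃ₗ[ℝ] W) (A : Set V) : affDim (e '' A) = affDim A := by
  rw [affDim, affDim, ← LinearEquiv.finrank_map_eq e]
  have h := AffineMap.map_vectorSpan (e : V →ₗ[ℝ] W).toAffineMap (s := A)
  simp only [LinearMap.coe_toAffineMap, LinearMap.toAffineMap_linear, LinearEquiv.coe_coe] at h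
  rw [← h]

theorem Antitone.apply_eq_of_mem_Icc {f : ℕ → ℝ} (hf : Antitone f) {a b c : ℕ}
    (hab : f a = f b) (hc : c ∈ Set.Icc a b) : f c = f a :=
  le_antisymm (hf hc.1) (hab ▸ hf hc.2)

theorem Antitone.apply_eq_apply_iff {f : ℕ → ℝ} (hf : Antitone f) {a b : ℕ} (hab : a ≤ b) :
    f a = f b ↔ ∀ k, a ≤ k → k < b → f (k + 1) = f k := by
  refine ⟨fun h k hak hkb => ?_, fun h => ?_⟩
  · rw [hf.apply_eq_of_mem_Icc h ⟨hak, hkb.le⟩, hf.apply_eq_of_mem_Icc h ⟨by omega, hkb⟩]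
  · induction b, hab using Nat.le_induction with
    | base => rfl
    | succ b hab ih => rw [ih fun k hak hkb => h k hak (by omega), h b hab (by omega)]

/-- `iterAvg f n i` is the average of `f (i + s)` for `s` distributed as `Bin(n, 1/2)`. -/
def iterAvg (f : ℕ → ℝ) : ℕ → ℕ → ℝ
  | 0 => f
  | n + 1 => fun i => (iterAvg f n i + iterAvg f n (i + 1)) / 2

theorem iterAvg_nonneg {f : ℕ → ℝ} (hf : ∀ k, 0 ≤ f k) (n i : ℕ) : 0 ≤ iterAvg f n i := by
  induction n generalizing i with
  | zero => exact hf i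
  | succ n ih => exact div_nonneg (add_nonneg (ih i) (ih (i + 1))) zero_le_two

theorem le_iterAvg_sub_iterAvg_succ {f : ℕ → ℝ} (hf : Antitone f) (n i : ℕ) :
    (f i - f (i + n + 1)) / 2 ^ n ≤ iterAvg f n i - iterAvg f n (i + 1) := by
  induction n generalizing i with
  | zero => simp [iterAvg]
  | succ n ih =>
    have h₂ := ih (i + 1)
    rw [show i + 1 + n + 1 = i + (n + 1) + 1 by omega] at h₂
    have hsplit : (f i - f (i + (n + 1) + 1)) / 2 ^ n
        ≤ (f i - f (i + n + 1)) / 2 ^ n + (f (i + 1) - f (i + (n + 1) + 1)) / 2 ^ n := by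
      rw [← add_div]
      gcongr
      linarith [hf (show i + 1 ≤ i + n + 1 by omega)]
    rw [pow_succ, ← div_div]
    simp only [iterAvg]
    linarith [ih i]

def windowAvg (f : ℕ → ℝ) (a b : ℕ) : ℝ := iterAvg f (b - a) a

def windowDrop (f : ℕ → ℝ) (a b : ℕ) : ℝ := (f a - f b) / 2 ^ (b - a + 1)

section window
variable {f : ℕ → ℝ}

@[simp] theorem windowAvg_self (a : ℕ) : windowAvg f a a = f a := by simp [windowAvg, iterAvg]

@[simp] theorem windowDrop_self (a : ℕ) : windowDrop f a a = 0 := by simp [windowDrop]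

theorem windowDrop_nonneg (hf : Antitone f) {a b : ℕ} (h : a ≤ b) : 0 ≤ windowDrop f a b :=
  div_nonneg (sub_nonneg.2 (hf h)) (by positivity)

theorem windowAvg_succ_right_add_windowDrop_le (hf : Antitone f) {a b : ℕ} (h : a ≤ b) :
    windowAvg f a (b + 1) + windowDrop f a (b + 1) ≤ windowAvg f a b := by
  obtain ⟨n, rfl⟩ : ∃ n, b = a + n := ⟨b - a, by omega⟩
  have key := le_iterAvg_sub_iterAvg_succ hf n a
  have hdrop : 0 ≤ f a - f (a + n + 1) := sub_nonneg.2 (hf (by omega))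
  simp only [windowAvg, windowDrop, show a + n + 1 - a = n + 1 by omega,
    show a + n - a = n by omega, iterAvg]
  have : (f a - f (a + n + 1)) / 2 ^ (n + 1 + 1) ≤ (f a - f (a + n + 1)) / 2 ^ n / 2 := by
    rw [div_div, ← pow_succ]; gcongr <;> norm_num
  linarith

theorem windowAvg_succ_left_add_windowDrop_le (hf : Antitone f) {a b : ℕ} (h : a < b) :
    windowAvg f (a + 1) b + windowDrop f (a + 1) b ≤ windowAvg f a b := by
  obtain ⟨n, rfl⟩ : ∃ n, b = a + n + 1 := ⟨b - a - 1, by omega⟩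
  have key := le_iterAvg_sub_iterAvg_succ hf n a
  have hstep : f (a + 1) ≤ f a := hf (by omega)
  simp only [windowAvg, windowDrop, show a + n + 1 - (a + 1) = n by omega,
    show a + n + 1 - a = n + 1 by omega, iterAvg]
  have : (f (a + 1) - f (a + n + 1)) / 2 ^ (n + 1) ≤ (f a - f (a + n + 1)) / 2 ^ n / 2 := by
    rw [div_div, ← pow_succ]; gcongr
  linarith

end window

namespace TypeB

open Finset

variable {r : ℕ}

theorem stdVec_apply (i : ℕ) (m : Fin r) : stdVec r i m = if (m : ℕ) + 1 = i then 1 else 0 := rfl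

theorem stdVec_eq_zero {i : ℕ} (h : r < i) : stdVec r i = 0 := by
  funext m
  rw [stdVec_apply, if_neg (by omega), Pi.zero_apply]

theorem simpleRootB_eq (i : ℕ) : simpleRootB r i = stdVec r i - stdVec r (i + 1) := by
  unfold simpleRootB
  split_ifs with h
  · rw [stdVec_eq_zero (i := i + 1) (by omega), sub_zero, h]
  · rfl

def weightedSum (r : ℕ) (w : ℕ → ℝ) : (Fin r → ℝ) →ₗ[ℝ] ℝ where
  toFun v := ∑ m : Fin r, w m * v m
  map_add' u v := by simp only [Pi.add_apply, mul_add, sum_add_distrib]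
  map_smul' c v := by
    simp only [Pi.smul_apply, smul_eq_mul, mul_sum, RingHom.id_apply]
    exact sum_congr rfl fun _ _ => by ring

theorem weightedSum_stdVec (w : ℕ → ℝ) (i : ℕ) :
    weightedSum r w (stdVec r i) = if 1 ≤ i ∧ i ≤ r then w (i - 1) else 0 := by
  simp only [weightedSum, LinearMap.coe_mk, AddHom.coe_mk, stdVec_apply, mul_ite, mul_one,
    mul_zero]
  split_ifs with h
  · rw [sum_eq_single (⟨i - 1, by omega⟩ : Fin r)]
    · rw [if_pos (by simp; omega)]
    · intro m _ hm
      exact if_neg fun hmi => hm (Fin.ext (by simp; omega))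
    · simp
  · exact sum_eq_zero fun m _ => if_neg (by omega)

/-- The coefficient of `α_{k+1}` in the expansion of a vector in the simple roots `α_1, …, α_r`
(for `k < r`). -/
def rootCoord (r k : ℕ) : (Fin r → ℝ) →ₗ[ℝ] ℝ := weightedSum r fun m => if m ≤ k then 1 else 0

/-- The height: the sum of all the coefficients `rootCoord r k`, `k < r`. -/
def rootHeight (r : ℕ) : (Fin r → ℝ) →ₗ[ℝ] ℝ := weightedSum r fun m => ((r - m : ℕ) : ℝ)

theorem rootCoord_stdVec {k : ℕ} (hk : k < r) (i : ℕ) :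
    rootCoord r k (stdVec r i) = if 1 ≤ i ∧ i ≤ k + 1 then 1 else 0 := by
  rw [rootCoord, weightedSum_stdVec]
  split_ifs <;> first | rfl | omega

theorem rootCoord_simpleRootB {k i : ℕ} (hk : k < r) (hi : 1 ≤ i) :
    rootCoord r k (simpleRootB r i) = if i = k + 1 then 1 else 0 := by
  rw [simpleRootB_eq, map_sub, rootCoord_stdVec hk, rootCoord_stdVec hk]
  split_ifs <;> norm_num <;> omega

theorem rootHeight_stdVec {i : ℕ} (hi : 1 ≤ i) : rootHeight r (stdVec r i) = (r + 1 - i : ℕ) := by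
  rw [rootHeight, weightedSum_stdVec]
  split_ifs with h
  · rw [show r - (i - 1) = r + 1 - i by omega]
  · rw [show r + 1 - i = 0 by omega, Nat.cast_zero]

def windows (r : ℕ) : Finset (ℕ × ℕ) :=
  (range (2 * r) ×ˢ range (2 * r)).filter fun q => q.1 < q.2 ∧ q.1 + q.2 < 2 * r

theorem mem_windows {q : ℕ × ℕ} : q ∈ windows r ↔ q.1 < q.2 ∧ q.1 + q.2 < 2 * r := by
  simp only [windows, mem_filter, mem_product, mem_range]
  omega

/-- Folding `1, …, 2r + 1` onto `±e_1, …, ±e_r, 0` by `ε_k = e_k - e_{2r+2-k}`, the window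
`[a, b]` goes to `ε_{a+1} - ε_{b+1}`, that is to `e_{a+1} - e_{b+1}`, `e_{a+1}` or
`e_{a+1} + e_{2r+1-b}` according as `b < r`, `b = r` or `b > r`. -/
def windowRoot (r : ℕ) (q : ℕ × ℕ) : Fin r → ℝ :=
  stdVec r (q.1 + 1) - stdVec r (q.2 + 1) + stdVec r (2 * r + 1 - q.2)

theorem rootCoord_windowRoot_ne_zero {q : ℕ × ℕ} (hq : q ∈ windows r) {k : ℕ} (hk : k < r) :
    rootCoord r k (windowRoot r q) ≠ 0 ↔ q.1 ≤ k ∧ k < q.2 := by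
  rw [mem_windows] at hq
  simp only [windowRoot, map_add, map_sub, rootCoord_stdVec hk]
  split_ifs <;> norm_num <;> omega

theorem rootHeight_windowRoot {q : ℕ × ℕ} (hq : q ∈ windows r) :
    rootHeight r (windowRoot r q) = (q.2 : ℝ) - q.1 := by
  rw [mem_windows] at hq
  simp only [windowRoot, map_add, map_sub, rootHeight_stdVec (Nat.le_add_left 1 _),
    rootHeight_stdVec (show 1 ≤ 2 * r + 1 - q.2 by omega)]
  have h : r + 1 - (q.1 + 1) + (r + 1 - (2 * r + 1 - q.2)) + q.1 = r + 1 - (q.2 + 1) + q.2 := by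
    omega
  have h' : ((r + 1 - (q.1 + 1) : ℕ) : ℝ) + ((r + 1 - (2 * r + 1 - q.2) : ℕ) : ℝ) + q.1
      = ((r + 1 - (q.2 + 1) : ℕ) : ℝ) + q.2 := by exact_mod_cast h
  linarith

/-- A window is read off its root: `a` is the first simple root in the support, `b - a` the
height. -/
theorem windowRoot_injOn : Set.InjOn (windowRoot r) (windows r) := by
  have hfirst : ∀ q ∈ windows r, ∀ q' ∈ windows r, windowRoot r q = windowRoot r q' →
      q'.1 ≤ q.1 := by
    intro q hq q' hq' h
    have hk : q.1 < r := by rw [mem_windows] at hq; omega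
    have hne := (rootCoord_windowRoot_ne_zero hq hk).2 ⟨le_rfl, (mem_windows.1 hq).1⟩
    rw [h] at hne
    exact ((rootCoord_windowRoot_ne_zero hq' hk).1 hne).1
  intro q hq q' hq' h
  have h1 : q.1 = q'.1 := le_antisymm (hfirst q' hq' q hq h.symm) (hfirst q hq q' hq' h)
  have h2 := congrArg (rootHeight r) h
  rw [rootHeight_windowRoot hq, rootHeight_windowRoot hq', h1, sub_left_inj, Nat.cast_inj] at h2
  exact Prod.ext h1 h2

theorem windowRoot_mem_posRootsB {q : ℕ × ℕ} (hq : q ∈ windows r) :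
    windowRoot r q ∈ posRootsB r := by
  obtain ⟨a, b⟩ := q
  rw [mem_windows] at hq
  simp only [windowRoot, posRootsB]
  rcases lt_trichotomy b r with hb | rfl | hb
  · left
    refine ⟨a + 1, b + 1, by omega, by omega, by omega, Or.inl ?_⟩
    rw [stdVec_eq_zero (i := 2 * r + 1 - b) (by omega), add_zero]
  · right
    refine ⟨a + 1, by omega, by omega, ?_⟩
    rw [stdVec_eq_zero (i := b + 1) (by omega), stdVec_eq_zero (i := 2 * b + 1 - b) (by omega)]
    simp
  · left
    refine ⟨a + 1, 2 * r + 1 - b, by omega, by omega, by omega, Or.inr ?_⟩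
    rw [stdVec_eq_zero (i := b + 1) (by omega), sub_zero]

theorem exists_windowRoot_eq {v : Fin r → ℝ} (hv : v ∈ posRootsB r) :
    ∃ q ∈ windows r, windowRoot r q = v := by
  rcases hv with ⟨i, j, hi, hij, hj, rfl | rfl⟩ | ⟨i, hi, hir, rfl⟩
  · refine ⟨(i - 1, j - 1), mem_windows.2 ⟨by simp; omega, by simp; omega⟩, ?_⟩
    simp only [windowRoot, Nat.sub_add_cancel hi, Nat.sub_add_cancel (hi.trans hij.le)]
    rw [stdVec_eq_zero (i := 2 * r + 1 - (j - 1)) (by omega), add_zero]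
  · refine ⟨(i - 1, 2 * r + 1 - j), mem_windows.2 ⟨by simp; omega, by simp; omega⟩, ?_⟩
    simp only [windowRoot, Nat.sub_add_cancel hi, show 2 * r + 1 - (2 * r + 1 - j) = j by omega]
    rw [stdVec_eq_zero (i := 2 * r + 1 - j + 1) (by omega), sub_zero]
  · refine ⟨(i - 1, r), mem_windows.2 ⟨by simp; omega, by simp; omega⟩, ?_⟩
    simp only [windowRoot, Nat.sub_add_cancel hi]
    rw [stdVec_eq_zero (i := r + 1) (by omega), show 2 * r + 1 - r = r + 1 by omega,
      stdVec_eq_zero (i := r + 1) (by omega)]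
    simp

def rootSpan (r : ℕ) (S : Set ℕ) : Submodule ℝ (Fin r → ℝ) :=
  Submodule.span ℝ {v | ∃ i ∈ S, v = simpleRootB r i}

variable {S : Set ℕ}

theorem rootCoord_eq_zero_of_mem_rootSpan (hS : ∀ i ∈ S, 1 ≤ i) {k : ℕ} (hk : k < r)
    (hkS : k + 1 ∉ S) {v : Fin r → ℝ} (hv : v ∈ rootSpan r S) : rootCoord r k v = 0 := by
  have hle : rootSpan r S ≤ LinearMap.ker (rootCoord r k) := by
    refine Submodule.span_le.2 ?_
    rintro _ ⟨i, hi, rfl⟩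
    rw [SetLike.mem_coe, LinearMap.mem_ker, rootCoord_simpleRootB hk (hS i hi), if_neg]
    rintro rfl
    exact hkS hi
  exact hle hv

theorem stdVec_sub_stdVec_mem_rootSpan {c d : ℕ} (hcd : c ≤ d)
    (h : ∀ k, c ≤ k → k < d → k < r → k + 1 ∈ S) :
    stdVec r (c + 1) - stdVec r (d + 1) ∈ rootSpan r S := by
  induction d, hcd using Nat.le_induction with
  | base => simp
  | succ d hcd ih =>
    have hstep : stdVec r (d + 1) - stdVec r (d + 1 + 1) ∈ rootSpan r S := by
      by_cases hd : d < r
      · rw [← simpleRootB_eq]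
        exact Submodule.subset_span ⟨d + 1, h d hcd (by omega) hd, rfl⟩
      · rw [stdVec_eq_zero (by omega), stdVec_eq_zero (by omega), sub_zero]
        exact zero_mem _
    simpa using add_mem (ih fun k h₁ h₂ h₃ => h k h₁ (by omega) h₃) hstep

theorem windowRoot_mem_rootSpan_iff (hS : ∀ i ∈ S, 1 ≤ i) {q : ℕ × ℕ} (hq : q ∈ windows r) :
    windowRoot r q ∈ rootSpan r S ↔ ∀ k, q.1 ≤ k → k < q.2 → k < r → k + 1 ∈ S := by
  refine ⟨fun hv k h₁ h₂ hk => ?_, fun h => ?_⟩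
  · by_contra hkS
    exact (rootCoord_windowRoot_ne_zero hq hk).2 ⟨h₁, h₂⟩
      (rootCoord_eq_zero_of_mem_rootSpan hS hk hkS hv)
  obtain ⟨a, b⟩ := q
  rw [mem_windows] at hq
  have hfold : stdVec r (2 * r + 1 - b) ∈ rootSpan r S := by
    by_cases hb : r ≤ b
    · have := stdVec_sub_stdVec_mem_rootSpan (S := S) (c := 2 * r - b) (d := r) (by omega)
        fun k h₁ h₂ h₃ => h k (by omega) (by omega) h₃
      rwa [stdVec_eq_zero (i := r + 1) (by omega), sub_zero,
        show 2 * r - b + 1 = 2 * r + 1 - b by omega] at this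
    · rw [stdVec_eq_zero (by omega)]
      exact zero_mem _
  exact add_mem (stdVec_sub_stdVec_mem_rootSpan hq.1.le h) hfold

theorem ncard_posRootsB_mem (V : Submodule ℝ (Fin r → ℝ)) (P : ℕ × ℕ → Prop) [DecidablePred P]
    (hP : ∀ q ∈ windows r, windowRoot r q ∈ V ↔ P q) :
    {a ∈ posRootsB r | a ∈ V}.ncard = ((windows r).filter P).card := by
  have himage : {a ∈ posRootsB r | a ∈ V} = windowRoot r '' ↑((windows r).filter P) := by
    ext v
    constructor
    · rintro ⟨hv, hvV⟩
      obtain ⟨q, hq, rfl⟩ := exists_windowRoot_eq hv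
      exact ⟨q, mem_filter.2 ⟨hq, (hP q hq).1 hvV⟩, rfl⟩
    · rintro ⟨q, hq, rfl⟩
      rw [mem_coe, mem_filter] at hq
      exact ⟨windowRoot_mem_posRootsB hq.1, (hP q hq.1).2 hq.2⟩
  rw [himage, (windowRoot_injOn.mono (filter_subset _ _)).ncard_image,
    Set.ncard_coe_finset]

theorem card_windows (r : ℕ) : (windows r).card = r ^ 2 := by
  calc (windows r).card = (range r ×ˢ range r).card := by
        refine card_nbij' (fun q => if q.2 < r then q else (2 * r - 1 - q.2, q.1))
          (fun q => if q.1 < q.2 then q else (q.2, 2 * r - 1 - q.1)) ?_ ?_ ?_ ?_ <;>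
        · intro q hq
          simp only [mem_coe, mem_windows, mem_product, mem_range] at hq ⊢
          split_ifs <;> (try dsimp only at *) <;> (try rw [Prod.ext_iff]) <;> (try dsimp only) <;>
            omega
    _ = r ^ 2 := by rw [card_product, card_range, sq]

end TypeB

namespace BZBC

open Finset

/-- `inl (i, j)` indexes the entry `x_{i,j}` of a pattern and `inr (i, j)` the entry `y_{i,j}`. -/
abbrev Entry := (ℕ × ℕ) ⊕ (ℕ × ℕ)

def entries : ((ℕ → ℕ → ℝ) × (ℕ → ℕ → ℝ)) ≃ₗ[ℝ] (Entry → ℝ) where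
  toFun p := Sum.elim (fun q => p.1 q.1 q.2) (fun q => p.2 q.1 q.2)
  invFun P := (fun i j => P (.inl (i, j)), fun i j => P (.inr (i, j)))
  map_add' p q := by funext c; rcases c with _ | _ <;> rfl
  map_smul' a p := by funext c; rcases c with _ | _ <;> rfl
  left_inv p := rfl
  right_inv P := by funext c; rcases c with _ | _ <;> rfl

@[simp] theorem entries_inl (p : (ℕ → ℕ → ℝ) × (ℕ → ℕ → ℝ)) (i j : ℕ) :
    entries p (.inl (i, j)) = p.1 i j := rfl

@[simp] theorem entries_inr (p : (ℕ → ℕ → ℝ) × (ℕ → ℕ → ℝ)) (i j : ℕ) :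
    entries p (.inr (i, j)) = p.2 i j := rfl

@[simp] theorem entries_symm_fst (P : Entry → ℝ) (i j : ℕ) :
    (entries.symm P).1 i j = P (.inl (i, j)) := rfl

def cells (r : ℕ) : Finset Entry :=
  let tri := (Icc 1 r ×ˢ Icc 1 r).filter fun q => q.1 ≤ q.2
  tri.disjSum tri

@[simp] theorem inl_mem_cells {r i j : ℕ} : .inl (i, j) ∈ cells r ↔ 1 ≤ i ∧ i ≤ j ∧ j ≤ r := by
  simp only [cells, inl_mem_disjSum, mem_filter, mem_product, mem_Icc]
  omega

@[simp] theorem inr_mem_cells {r i j : ℕ} : .inr (i, j) ∈ cells r ↔ 1 ≤ i ∧ i ≤ j ∧ j ≤ r := by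
  simp only [cells, inr_mem_disjSum, mem_filter, mem_product, mem_Icc]
  omega

/-- An entry of a pattern lies between the values of `λ` on its window of 0-based indices. -/
def window : Entry → ℕ × ℕ
  | .inl (i, j) => (j - i, j + i - 2)
  | .inr (i, j) => (j - i, j + i - 1)

/-- Inverse of `window` off the diagonal `a = b`. -/
def windowEntry (q : ℕ × ℕ) : Entry :=
  if (q.2 - q.1) % 2 = 0 then .inl ((q.2 - q.1) / 2 + 1, (q.1 + q.2) / 2 + 1)
  else .inr ((q.2 - q.1 + 1) / 2, (q.1 + q.2 + 1) / 2)

theorem window_fst_le_snd {r : ℕ} {c : Entry} (hc : c ∈ cells r) : (window c).1 ≤ (window c).2 := by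
  rcases c with ⟨i, j⟩ | ⟨i, j⟩ <;> simp only [inl_mem_cells, inr_mem_cells, window] at hc ⊢ <;>
    omega

theorem window_windowEntry {q : ℕ × ℕ} (h : q.1 ≤ q.2) : window (windowEntry q) = q := by
  obtain ⟨a, b⟩ := q
  unfold windowEntry
  split_ifs <;> simp only [window, Prod.mk.injEq] <;> omega

theorem windowEntry_window {r : ℕ} {c : Entry} (hc : c ∈ cells r)
    (h : (window c).1 ≠ (window c).2) : windowEntry (window c) = c := by
  rcases c with ⟨i, j⟩ | ⟨i, j⟩ <;>
    simp only [inl_mem_cells, inr_mem_cells, window] at hc h ⊢ <;> simp only [windowEntry]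
  · rw [if_pos (by omega), Sum.inl.injEq, Prod.mk.injEq]
    omega
  · rw [if_neg (by omega), Sum.inr.injEq, Prod.mk.injEq]
    omega

theorem windowEntry_mem_cells {r : ℕ} {q : ℕ × ℕ} (hq : q ∈ TypeB.windows r) :
    windowEntry q ∈ cells r := by
  rw [TypeB.mem_windows] at hq
  unfold windowEntry
  split_ifs <;> simp only [inl_mem_cells, inr_mem_cells] <;> omega

theorem window_mem_windows {r : ℕ} {c : Entry} (hc : c ∈ cells r)
    (h : (window c).1 ≠ (window c).2) : window c ∈ TypeB.windows r := by
  rw [TypeB.mem_windows]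
  rcases c with ⟨i, j⟩ | ⟨i, j⟩ <;> simp only [inl_mem_cells, inr_mem_cells, window] at hc h ⊢ <;>
    omega

theorem card_filter_cells {r : ℕ} (P : ℕ × ℕ → Prop) [DecidablePred P] (hP : ∀ a, ¬P (a, a)) :
    ((cells r).filter fun c => P (window c)).card = ((TypeB.windows r).filter P).card := by
  have hdiag : ∀ q, P q → q.1 ≠ q.2 := fun q hq h =>
    hP q.1 (by rwa [← Prod.mk.eta (p := q), ← h] at hq)
  refine card_nbij' window windowEntry (fun c hc => ?_) (fun q hq => ?_) (fun c hc => ?_)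
    (fun q hq => ?_) <;> simp only [coe_filter, Set.mem_ofPred_eq] at *
  · exact ⟨window_mem_windows hc.1 (hdiag _ hc.2), hc.2⟩
  · rw [window_windowEntry (TypeB.mem_windows.1 hq.1).1.le]
    exact ⟨windowEntry_mem_cells hq.1, hq.2⟩
  · exact windowEntry_window hc.1 (hdiag _ hc.2)
  · exact window_windowEntry (TypeB.mem_windows.1 hq.1).1.le

def lamPad (r : ℕ) (lam : ℕ → ℝ) (k : ℕ) : ℝ := if k < r then lam (k + 1) else 0

section lamPad
variable {r : ℕ} {lam : ℕ → ℝ}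

theorem antitone_lamPad (hdec : ∀ i, 1 ≤ i → i < r → lam (i + 1) ≤ lam i) (hnonneg : 0 ≤ lam r) :
    Antitone (lamPad r lam) := by
  refine antitone_nat_of_succ_le fun k => ?_
  unfold lamPad
  split_ifs with h₁ h₂ h₂
  · exact hdec (k + 1) (by omega) h₁
  · omega
  · rwa [show k + 1 = r by omega]
  · rfl

theorem lamPad_eq_zero {k : ℕ} (hk : r ≤ k) : lamPad r lam k = 0 := if_neg (by omega)

theorem lamPad_nonneg (hΛ : Antitone (lamPad r lam)) (k : ℕ) : 0 ≤ lamPad r lam k :=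
  (lamPad_eq_zero (le_max_right k r)).symm.le.trans (hΛ (le_max_left k r))

end lamPad

def basePoint (r : ℕ) (lam : ℕ → ℝ) (c : Entry) : ℝ :=
  if c ∈ cells r then windowAvg (lamPad r lam) (window c).1 (window c).2 else 0

def slack (r : ℕ) (lam : ℕ → ℝ) (c : Entry) : ℝ :=
  if c ∈ cells r then windowDrop (lamPad r lam) (window c).1 (window c).2 else 0

section basePoint
variable {r : ℕ} {lam : ℕ → ℝ} (hΛ : Antitone (lamPad r lam))
include hΛ

theorem slack_nonneg (c : Entry) : 0 ≤ slack r lam c := by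
  unfold slack
  split_ifs with hc
  · exact windowDrop_nonneg hΛ (window_fst_le_snd hc)
  · rfl

theorem basePoint_add_slack_le_of_succ_right {c c' : Entry} (hc : c ∈ cells r) (hc' : c' ∈ cells r)
    (h₁ : (window c).1 = (window c').1) (h₂ : (window c).2 = (window c').2 + 1) :
    basePoint r lam c + slack r lam c ≤ basePoint r lam c' := by
  simp only [basePoint, slack, if_pos hc, if_pos hc', h₁, h₂]
  exact windowAvg_succ_right_add_windowDrop_le hΛ (window_fst_le_snd hc')

theorem basePoint_add_slack_le_of_succ_left {c c' : Entry} (hc : c ∈ cells r) (hc' : c' ∈ cells r)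
    (h₁ : (window c).1 = (window c').1 + 1) (h₂ : (window c).2 = (window c').2) :
    basePoint r lam c + slack r lam c ≤ basePoint r lam c' := by
  have hlt : (window c').1 < (window c').2 := by have := window_fst_le_snd hc; omega
  simp only [basePoint, slack, if_pos hc, if_pos hc', h₁, h₂]
  exact windowAvg_succ_left_add_windowDrop_le hΛ hlt

/-- Every inequality of a BZ-pattern holds for `basePoint` with room `slack` for the smaller
side, so that anything between `basePoint` and `basePoint + slack` is again a pattern. -/
theorem entries_symm_mem_BZsetBC {P : Entry → ℝ}
    (hP : ∀ c, basePoint r lam c ≤ P c ∧ P c ≤ basePoint r lam c + slack r lam c) :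
    entries.symm P ∈ BZsetBC r lam := by
  have hle : ∀ c c', basePoint r lam c + slack r lam c ≤ basePoint r lam c' → P c ≤ P c' :=
    fun c c' h => (hP c).2.trans (h.trans (hP c').1)
  have hout : ∀ c ∉ cells r, P c = 0 := fun c hc => by
    have := hP c
    simp only [basePoint, slack, if_neg hc, add_zero] at this
    linarith
  refine ⟨fun j h₁ h₂ => ?_, ⟨fun i j h₁ h₂ h₃ => ?_, fun i j h₁ h₂ h₃ => ?_,
    fun i j h₁ h₂ h₃ => ⟨?_, ?_⟩, fun i h₁ h₂ => ?_⟩, fun i j h => ?_, fun i j h => ?_⟩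
  · have hc : Sum.inl (1, j) ∈ cells r := inl_mem_cells.2 ⟨le_rfl, h₁, h₂⟩
    have := hP (.inl (1, j))
    simp only [basePoint, slack, if_pos hc, window, show j + 1 - 2 = j - 1 by omega,
      windowAvg_self, windowDrop_self, add_zero] at this
    rw [entries_symm_fst, le_antisymm this.2 this.1, lamPad, if_pos (by omega),
      Nat.sub_add_cancel h₁]
  · exact hle _ _ (basePoint_add_slack_le_of_succ_right hΛ (inr_mem_cells.2 ⟨h₁, h₂, h₃⟩)
      (inl_mem_cells.2 ⟨h₁, h₂, h₃⟩) rfl (by simp only [window]; omega))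
  · exact hle _ _ (basePoint_add_slack_le_of_succ_left hΛ (inr_mem_cells.2 ⟨h₁, h₂.le, h₃⟩)
      (inl_mem_cells.2 ⟨by omega, h₂, h₃⟩) (by simp only [window]; omega)
      (by simp only [window]; omega))
  · exact hle _ _ (basePoint_add_slack_le_of_succ_left hΛ (inl_mem_cells.2 ⟨h₁, by omega, h₃⟩)
      (inr_mem_cells.2 ⟨h₁, h₂, by omega⟩) (by simp only [window]; omega)
      (by simp only [window]; omega))
  · exact hle _ _ (basePoint_add_slack_le_of_succ_right hΛ
      (inl_mem_cells.2 ⟨by omega, by omega, h₃⟩) (inr_mem_cells.2 ⟨h₁, h₂, by omega⟩) (by simp only [window]; omega)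
      (by simp only [window]; omega))
  · have hc : Sum.inr (i, r) ∈ cells r := inr_mem_cells.2 ⟨h₁, h₂, le_rfl⟩
    refine le_trans ?_ (hP _).1
    simp only [basePoint, if_pos hc]
    exact iterAvg_nonneg (lamPad_nonneg hΛ) _ _
  · exact hout _ (by simpa using h)
  · exact hout _ (by simpa using h)

theorem basePoint_mem : entries.symm (basePoint r lam) ∈ BZsetBC r lam :=
  entries_symm_mem_BZsetBC hΛ fun c => ⟨le_rfl, le_add_of_nonneg_right (slack_nonneg hΛ c)⟩

theorem basePoint_add_single_mem (c : Entry) :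
    entries.symm (basePoint r lam + slack r lam c • Pi.single c 1) ∈ BZsetBC r lam := by
  refine entries_symm_mem_BZsetBC hΛ fun c' => ?_
  simp only [Pi.add_apply, Pi.smul_apply, Pi.single_apply, smul_eq_mul, mul_ite, mul_one,
    mul_zero]
  split_ifs with h
  · subst h; exact ⟨le_add_of_nonneg_right (slack_nonneg hΛ c'), le_rfl⟩
  · exact ⟨by rw [add_zero], by linarith [slack_nonneg hΛ c']⟩

end basePoint

def IsForcedAt (r : ℕ) (lam : ℕ → ℝ) (p : (ℕ → ℕ → ℝ) × (ℕ → ℕ → ℝ)) (c : Entry) : Prop :=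
  lamPad r lam (window c).1 = lamPad r lam (window c).2 → entries p c = lamPad r lam (window c).1

section forced
variable {r : ℕ} {lam : ℕ → ℝ} {p : (ℕ → ℕ → ℝ) × (ℕ → ℕ → ℝ)}

theorem isForcedAt_inl_one (hp : p ∈ BZsetBC r lam) {j : ℕ} (h₁ : 1 ≤ j) (h₂ : j ≤ r) :
    IsForcedAt r lam p (.inl (1, j)) := fun _ => by
  rw [entries_inl, hp.1 j h₁ h₂, window, lamPad, if_pos (by omega), Nat.sub_add_cancel h₁]

theorem isForcedAt_inr (hΛ : Antitone (lamPad r lam)) (hp : p ∈ BZsetBC r lam) {i : ℕ}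
    (hi : 1 ≤ i) (hx : ∀ j, i ≤ j → j ≤ r → IsForcedAt r lam p (.inl (i, j))) {j : ℕ}
    (h₁ : i ≤ j) (h₂ : j ≤ r) : IsForcedAt r lam p (.inr (i, j)) := by
  intro hflat
  simp only [IsForcedAt, window, entries_inl, entries_inr] at hflat hx ⊢
  -- `x_{i,j+1} ≤ y_{i,j} ≤ x_{i,j}` (with `0 ≤ y_{i,r}` at the end of the row)
  obtain ⟨-, ⟨hyx, -, hxy, hy0⟩, -, -⟩ := hp
  have flat : ∀ k, j - i ≤ k → k ≤ j + i - 1 → lamPad r lam k = lamPad r lam (j - i) :=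
    fun k hk hk' => hΛ.apply_eq_of_mem_Icc hflat ⟨hk, hk'⟩
  refine le_antisymm ?_ ?_
  · rw [← hx j h₁ h₂ (flat (j + i - 2) (by omega) (by omega)).symm]
    exact hyx i j hi h₁ h₂
  · rcases lt_or_eq_of_le h₂ with hj | rfl
    · have hx' := hx (j + 1) (by omega) hj
        ((flat _ (by omega) (by omega)).trans (flat _ (by omega) (by omega)).symm)
      rw [← flat (j + 1 - i) (by omega) (by omega), ← hx']
      exact (hxy i j hi h₁ hj).1
    · rw [← flat (j + i - 1) (by omega) le_rfl, lamPad_eq_zero (by omega)]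
      exact hy0 i hi h₁

theorem isForcedAt_inl_succ (hΛ : Antitone (lamPad r lam)) (hp : p ∈ BZsetBC r lam) {i : ℕ}
    (hi : 1 ≤ i) (hy : ∀ j, i ≤ j → j ≤ r → IsForcedAt r lam p (.inr (i, j))) {j : ℕ}
    (h₁ : i + 1 ≤ j) (h₂ : j ≤ r) : IsForcedAt r lam p (.inl (i + 1, j)) := by
  intro hflat
  simp only [IsForcedAt, window, entries_inl, entries_inr] at hflat hy ⊢
  -- `y_{i,j} ≤ x_{i+1,j} ≤ y_{i,j-1}`
  obtain ⟨-, ⟨-, hyx, hxy, -⟩, -, -⟩ := hp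
  have flat : ∀ k, j - (i + 1) ≤ k → k ≤ j + (i + 1) - 2 →
      lamPad r lam k = lamPad r lam (j - (i + 1)) :=
    fun k hk hk' => hΛ.apply_eq_of_mem_Icc hflat ⟨hk, hk'⟩
  refine le_antisymm ?_ ?_
  · have hy' := hy (j - 1) (by omega) (by omega)
      ((flat _ (by omega) (by omega)).trans (flat _ (by omega) (by omega)).symm)
    rw [← flat (j - 1 - i) (by omega) (by omega), ← hy']
    simpa only [Nat.sub_add_cancel (by omega : 1 ≤ j)] using
      (hxy i (j - 1) hi (by omega) (by omega)).2
  · have hy' := hy j (by omega) h₂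
      ((flat _ (by omega) (by omega)).trans (flat _ (by omega) (by omega)).symm)
    rw [← flat (j - i) (by omega) (by omega), ← hy']
    exact hyx i j hi (by omega) h₂

theorem isForcedAt (hΛ : Antitone (lamPad r lam)) (hp : p ∈ BZsetBC r lam) {c : Entry}
    (hc : c ∈ cells r) : IsForcedAt r lam p c := by
  have key : ∀ i, 1 ≤ i → (∀ j, i ≤ j → j ≤ r → IsForcedAt r lam p (.inl (i, j))) ∧
      (∀ j, i ≤ j → j ≤ r → IsForcedAt r lam p (.inr (i, j))) := by
    intro i hi
    induction i, hi using Nat.le_induction with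
    | base =>
      have hx := fun j (h₁ : 1 ≤ j) h₂ => isForcedAt_inl_one hp h₁ h₂
      exact ⟨hx, fun j => isForcedAt_inr hΛ hp le_rfl hx⟩
    | succ i hi ih =>
      have hx := fun j (h₁ : i + 1 ≤ j) h₂ => isForcedAt_inl_succ hΛ hp hi ih.2 h₁ h₂
      exact ⟨hx, fun j => isForcedAt_inr hΛ hp (by omega) hx⟩
  rcases c with ⟨i, j⟩ | ⟨i, j⟩
  · rw [inl_mem_cells] at hc
    exact (key i hc.1).1 j hc.2.1 hc.2.2
  · rw [inr_mem_cells] at hc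
    exact (key i hc.1).2 j hc.2.1 hc.2.2

theorem entries_eq_zero_of_not_mem (hp : p ∈ BZsetBC r lam) {c : Entry} (hc : c ∉ cells r) :
    entries p c = 0 := by
  rcases c with ⟨i, j⟩ | ⟨i, j⟩
  · exact hp.2.2.1 i j (by simpa using hc)
  · exact hp.2.2.2 i j (by simpa using hc)

end forced

theorem affDim_BZsetBC {r : ℕ} {lam : ℕ → ℝ} (hΛ : Antitone (lamPad r lam)) :
    affDim (BZsetBC r lam) =
      ((TypeB.windows r).filter fun q => lamPad r lam q.1 ≠ lamPad r lam q.2).card := by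
  rw [← affDim_image_linearEquiv entries, affDim,
    finrank_vectorSpan_eq_card_of_free (A := entries '' BZsetBC r lam) (p₀ := basePoint r lam)
      ((cells r).filter fun c => lamPad r lam (window c).1 ≠ lamPad r lam (window c).2)
      ⟨_, basePoint_mem hΛ, entries.apply_symm_apply _⟩ ?_ ?_,
    card_filter_cells (fun q => lamPad r lam q.1 ≠ lamPad r lam q.2) fun a => not_not.2 rfl]
  · rintro _ ⟨p, hp, rfl⟩ c hc
    by_cases hcell : c ∈ cells r
    · have hflat : lamPad r lam (window c).1 = lamPad r lam (window c).2 := by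
        simpa [hcell] using hc
      have h₀ := isForcedAt hΛ (basePoint_mem hΛ) hcell hflat
      rw [entries.apply_symm_apply] at h₀
      rw [isForcedAt hΛ hp hcell hflat, h₀]
    · rw [entries_eq_zero_of_not_mem hp hcell, basePoint, if_neg hcell]
  · intro c hc
    rw [mem_filter] at hc
    refine ⟨slack r lam c, ?_, _, basePoint_add_single_mem hΛ c, entries.apply_symm_apply _⟩
    rw [slack, if_pos hc.1, windowDrop]
    exact div_ne_zero (sub_ne_zero.2 hc.2) (by positivity)

section flatSet
variable {r : ℕ} {lam : ℕ → ℝ}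

def flatSet (r : ℕ) (lam : ℕ → ℝ) : Set ℕ :=
  {i | 1 ≤ i ∧ i < r ∧ lam i = lam (i + 1)} ∪ {i | i = r ∧ lam r = 0}

theorem succ_mem_flatSet_iff {k : ℕ} (hk : k < r) :
    k + 1 ∈ flatSet r lam ↔ lamPad r lam (k + 1) = lamPad r lam k := by
  simp only [flatSet, Set.mem_union, Set.mem_ofPred_eq, lamPad, if_pos hk]
  by_cases h : k + 1 < r
  · rw [if_pos h]
    constructor
    · rintro (⟨-, -, h'⟩ | ⟨h', -⟩) <;> [exact h'.symm; omega]
    · exact fun h' => Or.inl ⟨by omega, h, h'.symm⟩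
  · rw [if_neg h, show k + 1 = r by omega]
    constructor
    · rintro (⟨-, h', -⟩ | ⟨-, h'⟩) <;> [omega; exact h'.symm]
    · exact fun h' => Or.inr ⟨rfl, h'.symm⟩

theorem windowRoot_mem_rootSpan_flatSet_iff (hΛ : Antitone (lamPad r lam)) {q : ℕ × ℕ}
    (hq : q ∈ TypeB.windows r) :
    TypeB.windowRoot r q ∈ TypeB.rootSpan r (flatSet r lam) ↔
      lamPad r lam q.1 = lamPad r lam q.2 := by
  have hq' := TypeB.mem_windows.1 hq
  have hpos : ∀ i ∈ flatSet r lam, 1 ≤ i := by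
    rintro i (⟨hi, -⟩ | ⟨rfl, -⟩) <;> omega
  rw [TypeB.windowRoot_mem_rootSpan_iff hpos hq, hΛ.apply_eq_apply_iff hq'.1.le]
  refine forall_congr' fun k => imp_congr_right fun _ => imp_congr_right fun _ => ?_
  by_cases hk : k < r
  · rw [succ_mem_flatSet_iff hk]
    exact ⟨fun h => h hk, fun h _ => h⟩
  · simp only [hk, false_implies, lamPad_eq_zero (show r ≤ k + 1 by omega),
      lamPad_eq_zero (not_lt.1 hk)]

end flatSet

end BZBC

end

theorem dim_BZ_polytope_BC_general
    (r : ℕ) (lam : ℕ → ℝ)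
    (hdec : ∀ i, 1 ≤ i → i < r → lam (i + 1) ≤ lam i) (hnonneg : 0 ≤ lam r)
    (S : Set ℕ)
    (hS : S = {i | 1 ≤ i ∧ i < r ∧ lam i = lam (i + 1)} ∪ {i | i = r ∧ lam r = 0})
    (V : Submodule ℝ (Fin r → ℝ))
    (hV : V = Submodule.span ℝ {v | ∃ i ∈ S, v = simpleRootB r i}) :
    affDim (BZsetBC r lam) = r ^ 2 - Set.ncard {a ∈ posRootsB r | a ∈ V} := by
  have hΛ := BZBC.antitone_lamPad hdec hnonneg
  have hroots : ∀ q ∈ TypeB.windows r,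
      TypeB.windowRoot r q ∈ V ↔ BZBC.lamPad r lam q.1 = BZBC.lamPad r lam q.2 := by
    subst hS hV
    exact fun q hq => BZBC.windowRoot_mem_rootSpan_flatSet_iff hΛ hq
  have hsplit := Finset.card_filter_add_card_filter_not (s := TypeB.windows r)
    fun q => BZBC.lamPad r lam q.1 = BZBC.lamPad r lam q.2
  rw [BZBC.affDim_BZsetBC hΛ, TypeB.ncard_posRootsB_mem V _ hroots, ← TypeB.card_windows r,
    ← hsplit]
  simp only [ne_eq]
  omega

/-- **Dimension of the type `B`/`C` BZ-polytope.**
For `λ_1 ≥ … ≥ λ_r ≥ 0`, with `S = {i < r : λ_i = λ_{i+1}} ∪ {r if λ_r = 0}` and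
`V = span {α_i : i ∈ S}` (type `B_r` simple roots), the affine dimension of `BZ_λ`
equals `r² − #{α ∈ Φ⁺(B_r) : α ∈ V}`. -/
theorem dim_BZ_polytope_BC
    (r : ℕ) (hr : 1 ≤ r) (lam : ℕ → ℝ)
    (hdec : ∀ i, 1 ≤ i → i < r → lam (i + 1) ≤ lam i) (hnonneg : 0 ≤ lam r)
    (S : Set ℕ)
    (hS : S = {i | 1 ≤ i ∧ i < r ∧ lam i = lam (i + 1)} ∪ {i | i = r ∧ lam r = 0})
    (V : Submodule ℝ (Fin r → ℝ))
    (hV : V = Submodule.span ℝ {v | ∃ i ∈ S, v = simpleRootB r i}) :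
    affDim (BZsetBC r lam) = r ^ 2 - Set.ncard {a ∈ posRootsB r | a ∈ V} :=
  dim_BZ_polytope_BC_general r lam hdec hnonneg S hS V hV
end

section
/- Let r ≥ 1, let 1 ≤ a ≤ r, and let λ = (λ_1,…,λ_r) ∈ ℝ^r satisfy λ_1 ≥ … ≥ λ_r and λ_a = λ_{a+1} = … = λ_r = 0. Then every type B/C BZ-pattern (x_{i,j}, y_{i,j}) with top row λ satisfies: y_{i,j} = 0 for all 1 ≤ i ≤ j ≤ r with j − i ≥ a − 1, and x_{i,j} = 0 for all 2 ≤ i ≤ j ≤ r with j − i ≥ a − 1. In particular, with z = r − a + 1, exactly z² coordinates of the pattern (besides the top row) are forced to vanish. -/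
open scoped BigOperators

/-!
Each row of `y` is weakly decreasing, since `y i (j + 1) ≤ x i (j + 1) ≤ y i j`, and ends
in `y i r ≥ 0`; so `y ≥ 0`. Each diagonal of `x` is weakly decreasing, since
`x (i + 1) (j + 1) ≤ y i j ≤ x i j`, so `x i j ≤ x 1 (j - i + 1) = λ_{j-i+1}`.
When `j - i ≥ a - 1` this top entry vanishes and `0 ≤ y i j ≤ x i j ≤ 0`.
After shifting, the vanishing positions of `y` and of `x` become the pairs `p ≤ q` and `p > q`
in `[0, z)²`, which together fill the square.
-/

namespace IsBZBC

variable {r : ℕ} {x y : ℕ → ℕ → ℝ} {i j : ℕ}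

theorem y_succ_le (h : IsBZBC r x y) (hi : 1 ≤ i) (hij : i ≤ j) (hj : j + 1 ≤ r) :
    y i (j + 1) ≤ y i j :=
  (h.1 i (j + 1) hi (by omega) hj).trans (h.2.2.1 i j hi hij hj).1

theorem x_succ_succ_le (h : IsBZBC r x y) (hi : 1 ≤ i) (hij : i ≤ j) (hj : j + 1 ≤ r) :
    x (i + 1) (j + 1) ≤ x i j :=
  (h.2.2.1 i j hi hij hj).2.trans (h.1 i j hi hij (by omega))

theorem y_add_le (h : IsBZBC r x y) (hi : 1 ≤ i) (hij : i ≤ j) {k : ℕ}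
    (hk : j + k ≤ r) : y i (j + k) ≤ y i j := by
  induction k with
  | zero => rfl
  | succ k ih =>
    rw [← add_assoc]
    exact (h.y_succ_le hi (by omega) (by omega)).trans (ih (by omega))

theorem x_add_add_le (h : IsBZBC r x y) (hi : 1 ≤ i) (hij : i ≤ j) {k : ℕ}
    (hk : j + k ≤ r) : x (i + k) (j + k) ≤ x i j := by
  induction k with
  | zero => rfl
  | succ k ih =>
    rw [← add_assoc, ← add_assoc]
    exact (h.x_succ_succ_le (by omega) (by omega) (by omega)).trans (ih (by omega))

theorem y_nonneg (h : IsBZBC r x y) (hi : 1 ≤ i) (hij : i ≤ j) (hjr : j ≤ r) :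
    0 ≤ y i j := by
  have hyr := h.y_add_le hi hij (k := r - j) (by omega)
  rw [Nat.add_sub_cancel' hjr] at hyr
  exact (h.2.2.2 i hi (by omega)).trans hyr

theorem x_le_top (h : IsBZBC r x y) (hi : 1 ≤ i) (hij : i ≤ j) (hjr : j ≤ r) :
    x i j ≤ x 1 (j - i + 1) := by
  have hdiag := h.x_add_add_le le_rfl (Nat.le_add_left 1 (j - i)) (k := i - 1) (by omega)
  rwa [Nat.add_sub_cancel' hi, show j - i + 1 + (i - 1) = j by omega] at hdiag

theorem eq_zero_of_top_eq_zero (h : IsBZBC r x y) (hi : 1 ≤ i) (hij : i ≤ j) (hjr : j ≤ r)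
    (htop : x 1 (j - i + 1) = 0) : x i j = 0 ∧ y i j = 0 := by
  have hx := htop ▸ h.x_le_top hi hij hjr
  have hy := h.y_nonneg hi hij hjr
  have hyx := h.1 i j hi hij hjr
  constructor <;> linarith

end IsBZBC

open Finset in
theorem ncard_band_add_ncard_band (r a : ℕ) (ha : 1 ≤ a) (har : a ≤ r) :
    Set.ncard {q : ℕ × ℕ | 1 ≤ q.1 ∧ q.1 ≤ q.2 ∧ q.2 ≤ r ∧ q.1 + a ≤ q.2 + 1} +
        Set.ncard {q : ℕ × ℕ | 2 ≤ q.1 ∧ q.1 ≤ q.2 ∧ q.2 ≤ r ∧ q.1 + a ≤ q.2 + 1} =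
      (r - a + 1) ^ 2 := by
  set z := r - a + 1
  have hupper :
      Set.ncard {q : ℕ × ℕ | 1 ≤ q.1 ∧ q.1 ≤ q.2 ∧ q.2 ≤ r ∧ q.1 + a ≤ q.2 + 1} =
      #{p ∈ range z ×ˢ range z | p.1 ≤ p.2} := by
    refine (Set.ncard_congr (fun q _ => (q.1 - 1, q.2 - a)) ?_ ?_ ?_).trans
      (Set.ncard_coe_finset _)
    · rintro ⟨i, j⟩ hq
      simp only [Set.mem_ofPred_eq, coe_filter, mem_product, mem_range] at hq ⊢
      omega
    · rintro ⟨i, j⟩ ⟨k, l⟩ hq hq' e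
      simp only [Set.mem_ofPred_eq, Prod.mk.injEq] at hq hq' e ⊢
      omega
    · rintro ⟨k, l⟩ hp
      simp only [coe_filter, mem_product, mem_range, Set.mem_ofPred_eq] at hp
      exact ⟨(k + 1, l + a), by simp only [Set.mem_ofPred_eq]; omega,
        by simp only [Prod.mk.injEq]; omega⟩
  have hlower :
      Set.ncard {q : ℕ × ℕ | 2 ≤ q.1 ∧ q.1 ≤ q.2 ∧ q.2 ≤ r ∧ q.1 + a ≤ q.2 + 1} =
      #{p ∈ range z ×ˢ range z | ¬p.1 ≤ p.2} := by
    refine (Set.ncard_congr (fun q _ => (q.2 - a, q.1 - 2)) ?_ ?_ ?_).trans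
      (Set.ncard_coe_finset _)
    · rintro ⟨i, j⟩ hq
      simp only [Set.mem_ofPred_eq, coe_filter, mem_product, mem_range] at hq ⊢
      omega
    · rintro ⟨i, j⟩ ⟨k, l⟩ hq hq' e
      simp only [Set.mem_ofPred_eq, Prod.mk.injEq] at hq hq' e ⊢
      omega
    · rintro ⟨k, l⟩ hp
      simp only [coe_filter, mem_product, mem_range, Set.mem_ofPred_eq] at hp
      exact ⟨(l + 2, k + a), by simp only [Set.mem_ofPred_eq]; omega,
        by simp only [Prod.mk.injEq]; omega⟩
  rw [hupper, hlower, card_filter_add_card_filter_not, card_product, card_range, sq]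

theorem vanishing_triangle_BC_general
    (r a : ℕ) (ha : 1 ≤ a) (har : a ≤ r) (lam : ℕ → ℝ)
    (hzero : ∀ k, a ≤ k → k ≤ r → lam k = 0)
    (x y : ℕ → ℕ → ℝ)
    (htop : ∀ j, 1 ≤ j → j ≤ r → x 1 j = lam j)
    (hBZ : IsBZBC r x y) :
    (∀ i j, 1 ≤ i → i ≤ j → j ≤ r → i + a ≤ j + 1 → y i j = 0) ∧
      (∀ i j, 2 ≤ i → i ≤ j → j ≤ r → i + a ≤ j + 1 → x i j = 0) ∧
      Set.ncard {q : ℕ × ℕ | 1 ≤ q.1 ∧ q.1 ≤ q.2 ∧ q.2 ≤ r ∧ q.1 + a ≤ q.2 + 1} +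
          Set.ncard {q : ℕ × ℕ | 2 ≤ q.1 ∧ q.1 ≤ q.2 ∧ q.2 ≤ r ∧ q.1 + a ≤ q.2 + 1} =
        (r - a + 1) ^ 2 := by
  have hvanish :
      ∀ i j, 1 ≤ i → i ≤ j → j ≤ r → i + a ≤ j + 1 → x i j = 0 ∧ y i j = 0 :=
    fun i j hi hij hjr hband => hBZ.eq_zero_of_top_eq_zero hi hij hjr <| by
      rw [htop _ (by omega) (by omega)]
      exact hzero _ (by omega) (by omega)
  exact ⟨fun i j hi hij hjr hband => (hvanish i j hi hij hjr hband).2,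
    fun i j hi hij hjr hband => (hvanish i j (by omega) hij hjr hband).1,
    ncard_band_add_ncard_band r a ha har⟩

/-- **Vanishing triangle in type `B`/`C` BZ-patterns.**
If `λ_1 ≥ … ≥ λ_r` and `λ_a = … = λ_r = 0`, then in any type `B`/`C` BZ-pattern with top row
`λ` one has `y_{i,j} = 0` for `1 ≤ i ≤ j ≤ r` with `j − i ≥ a − 1` and `x_{i,j} = 0` for
`2 ≤ i ≤ j ≤ r` with `j − i ≥ a − 1`; with `z = r − a + 1`, exactly `z²` coordinates (besides
the top row) are forced to vanish. -/
theorem vanishing_triangle_BC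
    (r a : ℕ) (hr : 1 ≤ r) (ha : 1 ≤ a) (har : a ≤ r) (lam : ℕ → ℝ)
    (hdec : ∀ i, 1 ≤ i → i < r → lam (i + 1) ≤ lam i)
    (hzero : ∀ k, a ≤ k → k ≤ r → lam k = 0)
    (x y : ℕ → ℕ → ℝ)
    (htop : ∀ j, 1 ≤ j → j ≤ r → x 1 j = lam j)
    (hBZ : IsBZBC r x y) :
    (∀ i j, 1 ≤ i → i ≤ j → j ≤ r → i + a ≤ j + 1 → y i j = 0) ∧
      (∀ i j, 2 ≤ i → i ≤ j → j ≤ r → i + a ≤ j + 1 → x i j = 0) ∧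
      Set.ncard {q : ℕ × ℕ | 1 ≤ q.1 ∧ q.1 ≤ q.2 ∧ q.2 ≤ r ∧ q.1 + a ≤ q.2 + 1} +
          Set.ncard {q : ℕ × ℕ | 2 ≤ q.1 ∧ q.1 ≤ q.2 ∧ q.2 ≤ r ∧ q.1 + a ≤ q.2 + 1} =
        (r - a + 1) ^ 2 :=
  vanishing_triangle_BC_general r a ha har lam hzero x y htop hBZ
end

section
/- Let r ≥ 3, let 1 ≤ a ≤ r − 1, and let λ = (λ_1,…,λ_r) ∈ ℝ^r satisfy λ_1 ≥ … ≥ λ_{r−1} ≥ |λ_r| and λ_a = λ_{a+1} = … = λ_r = 0. Then every type D BZ-pattern (x_{i,j}, y_{i,j}) with top row λ satisfies: y_{i,j} = 0 for all 1 ≤ i ≤ j ≤ r−1 with j − i ≥ a − 1, and x_{i,j} = 0 for all 2 ≤ i ≤ j ≤ r with j − i ≥ a − 1. In particular, with z = r − a + 1, exactly z² − z coordinates of the pattern (besides the top row) are forced to vanish. -/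
open scoped BigOperators

/-
Along each diagonal the interlacing inequalities give `x (i+1) (j+1) ≤ y i j ≤ x i j`, so every
entry of a type `D` BZ-pattern is bounded above by the top-row entry on its diagonal; the entries
on the diagonals starting at `λ_a, …, λ_r` are therefore nonpositive. In the last column the
closing inequality `y ≤ x_{i,r} + x_{i+1,r} + x_{i,r-1}`, together with `x_{i,r}, x_{i+1,r} ≤ y`,
forces `y_{i,r-1} ≥ -x_{i,r-1} ≥ 0`, so there all these entries vanish. Since `y` only decreases
down a diagonal, the zeros propagate up every such diagonal.
-/

namespace IsBZD

variable {r a : ℕ} {x y : ℕ → ℕ → ℝ}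

theorem x_le_top (h : IsBZD r x y) :
    ∀ i j, 1 ≤ i → i ≤ j → j ≤ r → x i j ≤ x 1 (j + 1 - i) := by
  intro i
  induction i with
  | zero => intro j hi; omega
  | succ n ih =>
    intro j _ hij hjr
    rcases Nat.eq_zero_or_pos n with rfl | hn
    · simp
    · obtain ⟨j, rfl⟩ : ∃ j', j = j' + 1 := ⟨j - 1, by omega⟩
      calc x (n + 1) (j + 1) ≤ y n j := (h.2.2.1 n j hn (by omega) (by omega)).2
        _ ≤ x n j := h.1 n j hn (by omega) (by omega)
        _ ≤ x 1 (j + 1 - n) := ih j hn (by omega) (by omega)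
        _ = x 1 (j + 1 + 1 - (n + 1)) := by congr 1; omega

theorem y_le_top (h : IsBZD r x y) {i j : ℕ} (hi : 1 ≤ i) (hij : i ≤ j) (hjr : j + 1 ≤ r) :
    y i j ≤ x 1 (j + 1 - i) :=
  (h.1 i j hi hij hjr).trans (h.x_le_top i j hi hij (by omega))

theorem y_add_le (h : IsBZD r x y) (d : ℕ) :
    ∀ i j, 1 ≤ i → i ≤ j → j + d + 1 ≤ r → y (i + d) (j + d) ≤ y i j := by
  induction d with
  | zero => intro i j _ _ _; rfl
  | succ d ih =>
    intro i j hi hij hjr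
    calc y (i + (d + 1)) (j + (d + 1)) = y (i + 1 + d) (j + 1 + d) := by ring_nf
      _ ≤ y (i + 1) (j + 1) := ih (i + 1) (j + 1) (by omega) (by omega) (by omega)
      _ ≤ x (i + 1) (j + 1) := h.1 (i + 1) (j + 1) (by omega) (by omega) (by omega)
      _ ≤ y i j := (h.2.2.1 i j hi hij (by omega)).2

theorem y_last_le (h : IsBZD r x y) {i : ℕ} (hi : 1 ≤ i) (hir : i + 1 ≤ r) :
    y i (r - 1) ≤ x i r + x (i + 1) r + x i (r - 1) := by
  rcases Nat.lt_or_ge (i + 1) r with hlt | hge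
  · have hmin := min_le_left (x i (r - 1)) (x (i + 1) (r - 1))
    linarith [h.2.2.2.1 i hi (by omega)]
  · obtain rfl : i = r - 1 := by omega
    rw [Nat.sub_add_cancel (by omega : 1 ≤ r)]
    exact h.2.2.2.2

theorem x_last_le_y (h : IsBZD r x y) {i : ℕ} (hi : 1 ≤ i) (hir : i + 1 ≤ r) :
    x i r ≤ y i (r - 1) ∧ x (i + 1) r ≤ y i (r - 1) := by
  have hint := h.2.2.1 i (r - 1) hi (by omega) (by omega)
  rwa [Nat.sub_add_cancel (by omega : 1 ≤ r)] at hint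

theorem neg_x_le_y_last (h : IsBZD r x y) {i : ℕ} (hi : 1 ≤ i) (hir : i + 1 ≤ r) :
    -x i (r - 1) ≤ y i (r - 1) := by
  obtain ⟨h₁, h₂⟩ := h.x_last_le_y hi hir
  linarith [h.y_last_le hi hir]

theorem x_nonpos_of_top_nonpos (h : IsBZD r x y)
    (htop : ∀ j, a ≤ j → j ≤ r → x 1 j ≤ 0) {i j : ℕ} (hi : 1 ≤ i) (hij : i ≤ j) (hjr : j ≤ r)
    (hija : i + a ≤ j + 1) : x i j ≤ 0 :=
  (h.x_le_top i j hi hij hjr).trans (htop _ (by omega) (by omega))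

theorem last_column_eq_zero (h : IsBZD r x y) (ha : 1 ≤ a)
    (htop : ∀ j, a ≤ j → j ≤ r → x 1 j ≤ 0) {i : ℕ} (hi : 1 ≤ i) (hira : i + a ≤ r) :
    y i (r - 1) = 0 ∧ x (i + 1) r = 0 := by
  have hint := h.x_last_le_y hi (by omega)
  have hxi := h.x_nonpos_of_top_nonpos htop hi (by omega) le_rfl (by omega)
  have hxi' := h.x_nonpos_of_top_nonpos htop (by omega : 1 ≤ i + 1) (by omega) le_rfl (by omega)
  have hxl := h.x_nonpos_of_top_nonpos htop hi (by omega) (by omega : r - 1 ≤ r) (by omega)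
  have hyl := h.neg_x_le_y_last hi (by omega)
  have hclose := h.y_last_le hi (by omega)
  constructor <;> linarith

theorem y_eq_zero_of_top_nonpos (h : IsBZD r x y) (ha : 1 ≤ a)
    (htop : ∀ j, a ≤ j → j ≤ r → x 1 j ≤ 0) {i j : ℕ} (hi : 1 ≤ i) (hij : i ≤ j) (hjr : j + 1 ≤ r)
    (hija : i + a ≤ j + 1) : y i j = 0 := by
  have hdiag := h.y_add_le (r - 1 - j) i j hi hij (by omega)
  obtain ⟨hlast, -⟩ := h.last_column_eq_zero ha htop (i := i + (r - 1 - j)) (by omega) (by omega)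
  rw [show j + (r - 1 - j) = r - 1 by omega, hlast] at hdiag
  exact le_antisymm ((h.y_le_top hi hij hjr).trans (htop _ (by omega) (by omega))) hdiag

theorem x_eq_zero_of_top_nonpos (h : IsBZD r x y) (ha : 1 ≤ a)
    (htop : ∀ j, a ≤ j → j ≤ r → x 1 j ≤ 0) {i j : ℕ} (hi : 2 ≤ i) (hij : i ≤ j) (hjr : j ≤ r)
    (hija : i + a ≤ j + 1) : x i j = 0 := by
  rcases hjr.lt_or_eq with hlt | rfl
  · have hy := h.y_eq_zero_of_top_nonpos ha htop (by omega : 1 ≤ i) hij hlt hija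
    have hle := h.1 i j (by omega) hij hlt
    linarith [h.x_nonpos_of_top_nonpos htop (by omega : 1 ≤ i) hij hjr hija]
  · obtain ⟨i, rfl⟩ : ∃ i', i = i' + 1 := ⟨i - 1, by omega⟩
    exact (h.last_column_eq_zero ha htop (by omega) (by omega)).2

end IsBZD

open Finset.HasAntidiagonal in
theorem two_mul_ncard_add_lt (K : ℕ) : 2 * {q : ℕ × ℕ | q.1 + q.2 < K}.ncard = (K + 1) * K := by
  have hset : {q : ℕ × ℕ | q.1 + q.2 < K} = ↑((Finset.range K).biUnion antidiagonal) := by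
    ext q
    simp only [Set.mem_ofPred_eq, Finset.coe_biUnion, Finset.coe_range, Set.mem_iUnion,
      Set.mem_Iio, Finset.mem_coe, mem_antidiagonal, exists_prop, exists_eq_right']
  have hdisj : (Finset.range K : Set ℕ).PairwiseDisjoint antidiagonal := by
    intro m _ n _ hmn
    exact Finset.disjoint_left.mpr fun q hq hq' =>
      hmn ((mem_antidiagonal.mp hq).symm.trans (mem_antidiagonal.mp hq'))
  rw [hset, Set.ncard_coe_finset, Finset.card_biUnion hdisj]
  have hshift : ∑ n ∈ Finset.range K, (n + 1) = ∑ n ∈ Finset.range (K + 1), n :=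
    (Finset.sum_range_succ' (fun n => n) K).symm
  simp only [Finset.Nat.card_antidiagonal]
  rw [hshift, mul_comm, Finset.sum_range_id_mul_two, Nat.add_sub_cancel]

theorem ncard_vanishing_triangle (r a : ℕ) (ha : 1 ≤ a) :
    Set.ncard {q : ℕ × ℕ | 1 ≤ q.1 ∧ q.1 ≤ q.2 ∧ q.2 + 1 ≤ r ∧ q.1 + a ≤ q.2 + 1} +
        Set.ncard {q : ℕ × ℕ | 2 ≤ q.1 ∧ q.1 ≤ q.2 ∧ q.2 ≤ r ∧ q.1 + a ≤ q.2 + 1} =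
      (r - a + 1) ^ 2 - (r - a + 1) := by
  have hy : (fun q : ℕ × ℕ => (q.1 + 1, q.2 + q.1 + a)) '' {q | q.1 + q.2 < r - a} =
      {q : ℕ × ℕ | 1 ≤ q.1 ∧ q.1 ≤ q.2 ∧ q.2 + 1 ≤ r ∧ q.1 + a ≤ q.2 + 1} := by
    ext ⟨i, j⟩
    simp only [Set.mem_image, Set.mem_ofPred_eq, Prod.mk.injEq, Prod.exists]
    constructor
    · rintro ⟨s, t, _, rfl, rfl⟩
      omega
    · rintro ⟨_, _, _, _⟩
      exact ⟨i - 1, j + 1 - i - a, by omega, by omega, by omega⟩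
  have hx : Prod.map Nat.succ Nat.succ ''
        {q : ℕ × ℕ | 1 ≤ q.1 ∧ q.1 ≤ q.2 ∧ q.2 + 1 ≤ r ∧ q.1 + a ≤ q.2 + 1} =
      {q : ℕ × ℕ | 2 ≤ q.1 ∧ q.1 ≤ q.2 ∧ q.2 ≤ r ∧ q.1 + a ≤ q.2 + 1} := by
    ext ⟨i, j⟩
    simp only [Set.mem_image, Set.mem_ofPred_eq, Prod.map, Prod.mk.injEq, Prod.exists]
    constructor
    · rintro ⟨s, t, _, rfl, rfl⟩
      omega
    · rintro ⟨_, _, _, _⟩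
      exact ⟨i - 1, j - 1, by omega, by omega, by omega⟩
  have hinj : Function.Injective fun q : ℕ × ℕ => (q.1 + 1, q.2 + q.1 + a) := by
    intro p q hpq
    simp only [Prod.mk.injEq] at hpq
    ext <;> omega
  rw [← hx, Set.ncard_image_of_injective _ (Nat.succ_injective.prodMap Nat.succ_injective), ← hy,
    Set.ncard_image_of_injective _ hinj]
  have hcount := two_mul_ncard_add_lt (r - a)
  have hsq : (r - a + 1) ^ 2 = (r - a + 1) * (r - a) + (r - a + 1) := by ring
  omega

theorem vanishing_triangle_D_general
    (r a : ℕ) (ha : 1 ≤ a) (lam : ℕ → ℝ)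
    (hzero : ∀ k, a ≤ k → k ≤ r → lam k = 0)
    (x y : ℕ → ℕ → ℝ)
    (htop : ∀ j, 1 ≤ j → j ≤ r → x 1 j = lam j)
    (hBZ : IsBZD r x y) :
    (∀ i j, 1 ≤ i → i ≤ j → j + 1 ≤ r → i + a ≤ j + 1 → y i j = 0) ∧
      (∀ i j, 2 ≤ i → i ≤ j → j ≤ r → i + a ≤ j + 1 → x i j = 0) ∧
      Set.ncard {q : ℕ × ℕ | 1 ≤ q.1 ∧ q.1 ≤ q.2 ∧ q.2 + 1 ≤ r ∧ q.1 + a ≤ q.2 + 1} +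
          Set.ncard {q : ℕ × ℕ | 2 ≤ q.1 ∧ q.1 ≤ q.2 ∧ q.2 ≤ r ∧ q.1 + a ≤ q.2 + 1} =
        (r - a + 1) ^ 2 - (r - a + 1) := by
  have htop_nonpos : ∀ j, a ≤ j → j ≤ r → x 1 j ≤ 0 := fun j haj hjr =>
    (htop j (by omega) hjr).trans (hzero j haj hjr) |>.le
  exact ⟨fun i j hi hij hjr hija => hBZ.y_eq_zero_of_top_nonpos ha htop_nonpos hi hij hjr hija,
    fun i j hi hij hjr hija => hBZ.x_eq_zero_of_top_nonpos ha htop_nonpos hi hij hjr hija,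
    ncard_vanishing_triangle r a ha⟩

/-- **Vanishing triangle in type `D` BZ-patterns.**
If `λ_1 ≥ … ≥ λ_{r−1} ≥ |λ_r|` and `λ_a = … = λ_r = 0` (with `a ≤ r − 1`), then in any type
`D` BZ-pattern with top row `λ` one has `y_{i,j} = 0` for `1 ≤ i ≤ j ≤ r−1` with
`j − i ≥ a − 1` and `x_{i,j} = 0` for `2 ≤ i ≤ j ≤ r` with `j − i ≥ a − 1`; with
`z = r − a + 1`, exactly `z² − z` coordinates (besides the top row) are forced to vanish. -/
theorem vanishing_triangle_D
    (r a : ℕ) (hr : 3 ≤ r) (ha : 1 ≤ a) (har : a ≤ r - 1) (lam : ℕ → ℝ)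
    (hdec : ∀ i, 1 ≤ i → i < r - 1 → lam (i + 1) ≤ lam i)
    (habs : |lam r| ≤ lam (r - 1))
    (hzero : ∀ k, a ≤ k → k ≤ r → lam k = 0)
    (x y : ℕ → ℕ → ℝ)
    (htop : ∀ j, 1 ≤ j → j ≤ r → x 1 j = lam j)
    (hBZ : IsBZD r x y) :
    (∀ i j, 1 ≤ i → i ≤ j → j + 1 ≤ r → i + a ≤ j + 1 → y i j = 0) ∧
      (∀ i j, 2 ≤ i → i ≤ j → j ≤ r → i + a ≤ j + 1 → x i j = 0) ∧
      Set.ncard {q : ℕ × ℕ | 1 ≤ q.1 ∧ q.1 ≤ q.2 ∧ q.2 + 1 ≤ r ∧ q.1 + a ≤ q.2 + 1} +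
          Set.ncard {q : ℕ × ℕ | 2 ≤ q.1 ∧ q.1 ≤ q.2 ∧ q.2 ≤ r ∧ q.1 + a ≤ q.2 + 1} =
        (r - a + 1) ^ 2 - (r - a + 1) :=
  vanishing_triangle_D_general r a ha lam hzero x y htop hBZ
end

section
/- Let r ≥ 3 and let λ = (λ_1,…,λ_r) ∈ ℝ^r satisfy λ_1 ≥ … ≥ λ_{r−1} ≥ |λ_r| and λ_{r−1} + λ_r = 0. Then every type D BZ-pattern (x_{i,j}, y_{i,j}) with top row λ satisfies y_{1,r−1} = x_{2,r}. If moreover λ_{r−2} = λ_{r−1}, then every such pattern also satisfies x_{2,r−1} = λ_{r−1}. -/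
open scoped BigOperators

/-!
Since `x_{2,r} ≤ y_{1,r−1}`, the last type `D` inequality in row `1` forces
`0 ≤ x_{1,r} + min (x_{1,r−1}, x_{2,r−1})`. When `λ_{r−1} + λ_r = 0` this pins the minimum to
`x_{1,r−1} = λ_{r−1}`, which makes both inequalities around `y_{1,r−1}` equalities and gives
`λ_{r−1} ≤ x_{2,r−1}`; the reverse bound `x_{2,r−1} ≤ y_{1,r−2} ≤ λ_{r−2}` comes from interlacing.
-/

namespace IsBZD

variable {r : ℕ} {x y : ℕ → ℕ → ℝ} {i : ℕ}

theorem x_succ_succ_le (h : IsBZD r x y) {j : ℕ} (hi : 1 ≤ i) (hij : i ≤ j) (hj : j + 1 ≤ r) :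
    x (i + 1) (j + 1) ≤ x i j :=
  (h.2.2.1 i j hi hij hj).2.trans (h.1 i j hi hij hj)

theorem x_succ_le_y_pred (h : IsBZD r x y) (hi : 1 ≤ i) (hir : i + 2 ≤ r) :
    x (i + 1) r ≤ y i (r - 1) := by
  have hinter := (h.2.2.1 i (r - 1) hi (by omega) (by omega)).2
  rwa [Nat.sub_add_cancel (by omega : 1 ≤ r)] at hinter

theorem add_min_nonneg (h : IsBZD r x y) (hi : 1 ≤ i) (hir : i + 2 ≤ r) :
    0 ≤ x i r + min (x i (r - 1)) (x (i + 1) (r - 1)) := by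
  linarith [h.x_succ_le_y_pred hi hir, h.2.2.2.1 i hi hir]

theorem y_pred_eq_of_add_eq_zero (h : IsBZD r x y) (hi : 1 ≤ i) (hir : i + 2 ≤ r)
    (h0 : x i r + x i (r - 1) = 0) : y i (r - 1) = x (i + 1) r := by
  refine le_antisymm ?_ (h.x_succ_le_y_pred hi hir)
  linarith [h.2.2.2.1 i hi hir, min_le_left (x i (r - 1)) (x (i + 1) (r - 1))]

theorem le_x_succ_of_add_eq_zero (h : IsBZD r x y) (hi : 1 ≤ i) (hir : i + 2 ≤ r)
    (h0 : x i r + x i (r - 1) = 0) : x i (r - 1) ≤ x (i + 1) (r - 1) := by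
  linarith [h.add_min_nonneg hi hir, min_le_right (x i (r - 1)) (x (i + 1) (r - 1))]

end IsBZD

theorem forced_equalities_D_general
    (r : ℕ) (hr : 3 ≤ r) (lam : ℕ → ℝ)
    (hsum : lam (r - 1) + lam r = 0)
    (x y : ℕ → ℕ → ℝ)
    (htop : ∀ j, 1 ≤ j → j ≤ r → x 1 j = lam j)
    (hBZ : IsBZD r x y) :
    y 1 (r - 1) = x 2 r ∧ (lam (r - 2) = lam (r - 1) → x 2 (r - 1) = lam (r - 1)) := by
  have hpen : x 1 (r - 1) = lam (r - 1) := htop _ (by omega) (by omega)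
  have h0 : x 1 r + x 1 (r - 1) = 0 := by rw [htop r (by omega) le_rfl, hpen]; linarith
  refine ⟨hBZ.y_pred_eq_of_add_eq_zero le_rfl hr h0, fun hlam => le_antisymm ?_ ?_⟩
  · have hinter := hBZ.x_succ_succ_le (i := 1) (j := r - 2) le_rfl (by omega) (by omega)
    rwa [show r - 2 + 1 = r - 1 by omega, htop _ (by omega) (by omega), hlam] at hinter
  · exact hpen ▸ hBZ.le_x_succ_of_add_eq_zero le_rfl hr h0

/-- **Forced equalities in type `D` BZ-patterns when `λ_{r−1} + λ_r = 0`.**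
If `λ_1 ≥ … ≥ λ_{r−1} ≥ |λ_r|` and `λ_{r−1} + λ_r = 0`, then every type `D` BZ-pattern with
top row `λ` satisfies `y_{1,r−1} = x_{2,r}`; if moreover `λ_{r−2} = λ_{r−1}`, then also
`x_{2,r−1} = λ_{r−1}`. -/
theorem forced_equalities_D
    (r : ℕ) (hr : 3 ≤ r) (lam : ℕ → ℝ)
    (hdec : ∀ i, 1 ≤ i → i < r - 1 → lam (i + 1) ≤ lam i)
    (habs : |lam r| ≤ lam (r - 1))
    (hsum : lam (r - 1) + lam r = 0)
    (x y : ℕ → ℕ → ℝ)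
    (htop : ∀ j, 1 ≤ j → j ≤ r → x 1 j = lam j)
    (hBZ : IsBZD r x y) :
    y 1 (r - 1) = x 2 r ∧ (lam (r - 2) = lam (r - 1) → x 2 (r - 1) = lam (r - 1)) :=
  forced_equalities_D_general r hr lam hsum x y htop hBZ
end

section
/- Let r ≥ 1 and let λ = (λ_1,…,λ_r) ∈ ℝ^r satisfy λ_1 > λ_2 > … > λ_r > 0. Then the type B/C BZ-polytope BZ_λ has nonempty topological interior in ℝ^{r²}; equivalently, its affine dimension equals r². -/
open scoped BigOperators

/-!
In the free coordinates `x i j` (`2 ≤ i`) and `y i j` the polytope contains a cube around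
the point `x i j = λ j`, `y i j = (λ j + λ (j + 1)) / 2`, where `λ (r + 1) := 0`: there every
defining inequality holds with slack at least `min_j (λ j - λ (j + 1)) / 2`. Hence `BZ_λ` has
nonempty interior in these coordinates, of which there are `r (r - 1) / 2 + r (r + 1) / 2 = r ^ 2`.
-/

theorem Finset.exists_pos_forall_le_of_pos {ι : Type*} (s : Finset ι) {f : ι → ℝ}
    (hf : ∀ i ∈ s, 0 < f i) : ∃ m, 0 < m ∧ ∀ i ∈ s, m ≤ f i := by
  rcases s.eq_empty_or_nonempty with rfl | hs
  · exact ⟨1, one_pos, by simp⟩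
  · obtain ⟨i₀, hi₀, hmin⟩ := s.exists_min_image f hs
    exact ⟨f i₀, hf i₀ hi₀, hmin⟩

theorem AffineMap.finrank_vectorSpan_image_of_interior_nonempty {E F : Type*}
    [NormedAddCommGroup E] [NormedSpace ℝ E] [AddCommGroup F] [Module ℝ F]
    (g : E →ᵃ[ℝ] F) (hg : Function.Injective g.linear) {s : Set E}
    (hs : (interior s).Nonempty) :
    Module.finrank ℝ (vectorSpan ℝ (g '' s)) = Module.finrank ℝ E := by
  have hspan : vectorSpan ℝ s = ⊤ := by
    rw [← direction_affineSpan, top_unique ((isOpen_interior.affineSpan_eq_top hs).ge.trans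
      (affineSpan_mono ℝ interior_subset)), AffineSubspace.direction_top]
  rw [← g.map_vectorSpan, hspan, Submodule.map_top, LinearMap.finrank_range_of_inj hg]

namespace BZPattern

theorem isBZBC_of_near_center {r : ℕ} {μ : ℕ → ℝ} {ε : ℝ} {x y : ℕ → ℕ → ℝ}
    (hgap : ∀ j, 1 ≤ j → j ≤ r → 4 * ε ≤ μ j - μ (j + 1)) (hbot : 0 ≤ μ (r + 1))
    (hx : ∀ i j, 1 ≤ i → i ≤ j → j ≤ r → |x i j - μ j| ≤ ε)
    (hy : ∀ i j, 1 ≤ i → i ≤ j → j ≤ r → |y i j - (μ j + μ (j + 1)) / 2| ≤ ε) :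
    IsBZBC r x y := by
  refine ⟨fun i j hi hij hjr => ?_, fun i j hi hij hjr => ?_, fun i j hi hij hjr => ?_,
    fun i hi hir => ?_⟩
  · have := abs_le.1 (hx i j hi hij hjr)
    have := abs_le.1 (hy i j hi hij hjr)
    linarith [hgap j (hi.trans hij) hjr]
  · have := abs_le.1 (hx (i + 1) j (by omega) hij hjr)
    have := abs_le.1 (hy i j hi hij.le hjr)
    linarith [hgap j (by omega) hjr]
  · have := abs_le.1 (hx i (j + 1) hi (by omega) hjr)
    have := abs_le.1 (hx (i + 1) (j + 1) (by omega) (by omega) hjr)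
    have := abs_le.1 (hy i j hi hij (by omega))
    constructor <;> linarith [hgap j (hi.trans hij) (by omega)]
  · have := abs_le.1 (hy i r hi hir le_rfl)
    linarith [hgap r (hi.trans hir) le_rfl]

-- Row `1` of `x` is the fixed top row `λ`, so only the rows `2 ≤ i` are coordinates.
def xIndex (r : ℕ) : Finset (ℕ × ℕ) :=
  (Finset.Icc 1 r ×ˢ Finset.Icc 1 r).filter fun p => 2 ≤ p.1 ∧ p.1 ≤ p.2

def yIndex (r : ℕ) : Finset (ℕ × ℕ) :=
  (Finset.Icc 1 r ×ˢ Finset.Icc 1 r).filter fun p => p.1 ≤ p.2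

theorem mem_xIndex {r i j : ℕ} : (i, j) ∈ xIndex r ↔ 2 ≤ i ∧ i ≤ j ∧ j ≤ r := by
  simp only [xIndex, Finset.mem_filter, Finset.mem_product, Finset.mem_Icc]
  omega

theorem mem_yIndex {r i j : ℕ} : (i, j) ∈ yIndex r ↔ 1 ≤ i ∧ i ≤ j ∧ j ≤ r := by
  simp only [yIndex, Finset.mem_filter, Finset.mem_product, Finset.mem_Icc]
  omega

theorem card_xIndex_add_card_yIndex (r : ℕ) : (xIndex r).card + (yIndex r).card = r ^ 2 := by
  have hx : (xIndex r).card
      = ((Finset.Icc 1 r ×ˢ Finset.Icc 1 r).filter fun p => ¬ p.1 ≤ p.2).card := by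
    apply Finset.card_nbij' (fun p => (p.2, p.1 - 1)) (fun p => (p.2 + 1, p.1)) <;>
      simp only [Set.MapsTo, Set.LeftInvOn, Finset.coe_filter, xIndex, Finset.mem_product,
        Finset.mem_Icc, Set.mem_ofPred_eq, Prod.forall, Prod.mk.injEq, and_true, true_and] <;>
      intros <;> omega
  rw [hx, add_comm, yIndex, Finset.card_filter_add_card_filter_not, Finset.card_product,
    Nat.card_Icc, Nat.add_sub_cancel, sq]

abbrev Coord (r : ℕ) : Type := xIndex r ⊕ yIndex r

abbrev Pattern : Type := (ℕ → ℕ → ℝ) × (ℕ → ℕ → ℝ)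

def embed (r : ℕ) : (Coord r → ℝ) →ₗ[ℝ] Pattern where
  toFun c := (fun i j => if h : (i, j) ∈ xIndex r then c (.inl ⟨(i, j), h⟩) else 0,
    fun i j => if h : (i, j) ∈ yIndex r then c (.inr ⟨(i, j), h⟩) else 0)
  map_add' c d := by
    ext i j <;> simp only [Pi.add_apply, Prod.fst_add, Prod.snd_add] <;> split_ifs <;> simp
  map_smul' a c := by
    ext i j <;> simp only [Pi.smul_apply, Prod.smul_fst, Prod.smul_snd] <;> split_ifs <;> simp

def coords (r : ℕ) (p : Pattern) : Coord r → ℝ :=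
  Sum.elim (fun a => p.1 a.1.1 a.1.2) (fun a => p.2 a.1.1 a.1.2)

theorem coords_embed (r : ℕ) (c : Coord r → ℝ) : coords r (embed r c) = c := by
  funext s
  rcases s with ⟨⟨i, j⟩, h⟩ | ⟨⟨i, j⟩, h⟩ <;> simp [coords, embed]

theorem embed_injective (r : ℕ) : Function.Injective (embed r) :=
  Function.LeftInverse.injective (coords_embed r)

def topRow (r : ℕ) (lam : ℕ → ℝ) : Pattern :=
  (fun i j => if i = 1 ∧ 1 ≤ j ∧ j ≤ r then lam j else 0, 0)

def fill (r : ℕ) (lam : ℕ → ℝ) : (Coord r → ℝ) →ᵃ[ℝ] Pattern where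
  toFun c := embed r c + topRow r lam
  linear := embed r
  map_vadd' c v := by simp only [vadd_eq_add, map_add, add_assoc]

theorem fill_coords {r : ℕ} {lam : ℕ → ℝ} {p : Pattern} (hp : p ∈ BZsetBC r lam) :
    fill r lam (coords r p) = p := by
  obtain ⟨htop, -, hx0, hy0⟩ := hp
  ext i j
  · by_cases hx : (i, j) ∈ xIndex r
    · have := mem_xIndex.1 hx
      simp [fill, embed, topRow, coords, hx, show i ≠ 1 by omega]
    · by_cases hrow : i = 1 ∧ 1 ≤ j ∧ j ≤ r
      · obtain ⟨rfl, hj⟩ := hrow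
        simp [fill, embed, topRow, hx, hj, htop j hj.1 hj.2]
      · simp [fill, embed, topRow, hx, hrow, hx0 i j (by rw [mem_xIndex] at hx; omega)]
  · by_cases hy : (i, j) ∈ yIndex r
    · simp [fill, embed, topRow, coords, hy]
    · simp [fill, embed, topRow, hy, hy0 i j (by rwa [mem_yIndex] at hy)]

noncomputable def center (r : ℕ) (μ : ℕ → ℝ) : Coord r → ℝ :=
  Sum.elim (fun a => μ a.1.2) (fun a => (μ a.1.2 + μ (a.1.2 + 1)) / 2)

theorem fill_mem_BZsetBC {r : ℕ} {lam μ : ℕ → ℝ} {ε : ℝ}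
    (hμ : ∀ j, 1 ≤ j → j ≤ r → μ j = lam j)
    (hgap : ∀ j, 1 ≤ j → j ≤ r → 4 * ε ≤ μ j - μ (j + 1)) (hbot : 0 ≤ μ (r + 1))
    {c : Coord r → ℝ} (hc : ∀ s, dist (c s) (center r μ s) ≤ ε) :
    fill r lam c ∈ BZsetBC r lam := by
  refine ⟨fun j hj hjr => ?_, isBZBC_of_near_center hgap hbot (fun i j hi hij hjr => ?_)
    (fun i j hi hij hjr => ?_), fun i j h => ?_, fun i j h => ?_⟩
  · simp [fill, embed, topRow, mem_xIndex, hj, hjr]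
  · by_cases hi1 : i = 1
    · subst hi1
      have hy : (1, j) ∈ yIndex r := mem_yIndex.2 ⟨le_rfl, hij, hjr⟩
      simpa [fill, embed, topRow, mem_xIndex, hij, hjr, hμ j hij hjr] using
        dist_nonneg.trans (hc (.inr ⟨_, hy⟩))
    · have hx : (i, j) ∈ xIndex r := mem_xIndex.2 ⟨by omega, hij, hjr⟩
      simpa [fill, embed, topRow, hx, hi1, center, Real.dist_eq] using hc (.inl ⟨_, hx⟩)
  · have hy : (i, j) ∈ yIndex r := mem_yIndex.2 ⟨hi, hij, hjr⟩
    simpa [fill, embed, topRow, hy, center, Real.dist_eq] using hc (.inr ⟨_, hy⟩)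
  · have hx : (i, j) ∉ xIndex r := fun hx => h (by rw [mem_xIndex] at hx; omega)
    simp [fill, embed, topRow, hx, show ¬(i = 1 ∧ 1 ≤ j ∧ j ≤ r) by omega]
  · simp [fill, embed, topRow, mem_yIndex, h]

end BZPattern

theorem BZ_polytope_BC_full_dimensional_general
    (r : ℕ) (lam : ℕ → ℝ)
    (hdec : ∀ i, 1 ≤ i → i < r → lam (i + 1) < lam i) (hpos : 0 < lam r) :
    affDim (BZsetBC r lam) = r ^ 2 := by
  open BZPattern in
  set μ : ℕ → ℝ := fun j => if j ≤ r then lam j else 0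
  have hgap : ∀ j ∈ Finset.Icc 1 r, 0 < μ j - μ (j + 1) := by
    intro j hj
    rw [Finset.mem_Icc] at hj
    rcases hj.2.lt_or_eq with hjr | rfl
    · simp [μ, hj.2, Nat.succ_le_of_lt hjr, hdec j hj.1 hjr]
    · simpa [μ] using hpos
  obtain ⟨m, hm, hmgap⟩ := (Finset.Icc 1 r).exists_pos_forall_le_of_pos hgap
  have hball : Metric.ball (center r μ) (m / 4) ⊆ fill r lam ⁻¹' BZsetBC r lam := fun c hc =>
    fill_mem_BZsetBC (fun j _ hjr => if_pos hjr)
      (fun j hj hjr => by linarith [hmgap j (Finset.mem_Icc.2 ⟨hj, hjr⟩)]) (by simp)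
      (fun s => (dist_le_pi_dist c _ s).trans (Metric.mem_ball.1 hc).le)
  have hinterior : (interior (fill r lam ⁻¹' BZsetBC r lam)).Nonempty :=
    ⟨center r μ, mem_interior_iff_mem_nhds.2
      (Filter.mem_of_superset (Metric.ball_mem_nhds _ (by positivity)) hball)⟩
  rw [affDim, ← Set.image_preimage_eq_of_subset (fun p hp => ⟨coords r p, fill_coords hp⟩),
    (fill r lam).finrank_vectorSpan_image_of_interior_nonempty (embed_injective r) hinterior,
    Module.finrank_fintype_fun_eq_card, Fintype.card_sum, Fintype.card_coe, Fintype.card_coe,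
    card_xIndex_add_card_yIndex]

/-- **Full-dimensionality of the type `B`/`C` BZ-polytope for strictly dominant `λ`.**
If `λ_1 > λ_2 > … > λ_r > 0`, then the type `B`/`C` BZ-polytope `BZ_λ` is full-dimensional:
its affine dimension equals `r²` (equivalently, it has nonempty interior in `ℝ^{r²}`). -/
theorem BZ_polytope_BC_full_dimensional
    (r : ℕ) (hr : 1 ≤ r) (lam : ℕ → ℝ)
    (hdec : ∀ i, 1 ≤ i → i < r → lam (i + 1) < lam i) (hpos : 0 < lam r) :
    affDim (BZsetBC r lam) = r ^ 2 :=
  BZ_polytope_BC_full_dimensional_general r lam hdec hpos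
end

section
/- Let r ≥ 1 and let λ, μ ∈ ℝ^r satisfy λ_1 ≥ … ≥ λ_r ≥ 0 and μ_1 ≥ … ≥ μ_r ≥ 0. Suppose λ − μ = Σ_{i=1}^{r} c_i α_i with every c_i > 0, where α_i = e_i − e_{i+1} for 1 ≤ i ≤ r−1 and α_r = e_r. Then μ lies in the topological interior (in ℝ^r) of the convex hull of the set {(ε_1 λ_{σ(1)}, …, ε_r λ_{σ(r)}) : σ a permutation of {1,…,r}, ε ∈ {−1,1}^r} of all signed permutations of λ. -/
open scoped BigOperators

/-!
Support-function argument. By Hahn–Banach it suffices that for every direction `y` and every `x`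
near `μ` some signed permutation `w` of `λ` has `⟨x, y⟩ ≤ ⟨w, y⟩`. Choosing the signs of `w` as
those of `y` and its entries in the order of `|y|` gives `⟨w, y⟩ = ⟨λ, d⟩`, where `d` is `|y|`
sorted decreasingly. By rearrangement `⟨μ, y⟩ ≤ ⟨μ, d⟩`. Since `d` is dominant, `⟨α_i, d⟩ ≥ 0`
for every simple root, and `∑ α_i = e_1`, so `⟨λ - μ, d⟩ = ∑ c_i ⟨α_i, d⟩ ≥ (min c) d_1`, with
`d_1 = ‖y‖_∞`; this absorbs `⟨x - μ, y⟩` as soon as `‖x - μ‖_∞ < min c / r`.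
-/

open Finset Matrix

theorem mem_convexHull_of_forall_exists_le {E : Type*} [TopologicalSpace E] [AddCommGroup E]
    [IsTopologicalAddGroup E] [Module ℝ E] [ContinuousSMul ℝ E] [LocallyConvexSpace ℝ E]
    [T2Space E] {s : Set E} (hs : s.Finite) {x : E}
    (h : ∀ f : StrongDual ℝ E, ∃ w ∈ s, f x ≤ f w) : x ∈ convexHull ℝ s := by
  by_contra hx
  obtain ⟨f, u, hfs, hfx⟩ :=
    geometric_hahn_banach_closed_point (convex_convexHull ℝ s) (hs.isClosed_convexHull ℝ) hx
  obtain ⟨w, hw, hxw⟩ := h f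
  linarith [hfs w (subset_convexHull ℝ s hw)]

theorem mem_convexHull_of_forall_exists_dotProduct_le {ι : Type*} [Fintype ι]
    {s : Set (ι → ℝ)} (hs : s.Finite) {x : ι → ℝ}
    (h : ∀ y : ι → ℝ, ∃ w ∈ s, x ⬝ᵥ y ≤ w ⬝ᵥ y) : x ∈ convexHull ℝ s := by
  classical
  refine mem_convexHull_of_forall_exists_le hs fun f => ?_
  have hf : ∀ z, f z = z ⬝ᵥ fun i => f fun j => if i = j then 1 else 0 := fun z => by
    simpa [dotProduct] using f.toLinearMap.pi_apply_eq_sum_univ z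
  obtain ⟨w, hw, hxw⟩ := h _
  exact ⟨w, hw, by rwa [hf x, hf w]⟩

theorem exists_perm_antitone_comp {α : Type*} [LinearOrder α] {n : ℕ} (f : Fin n → α) :
    ∃ σ : Equiv.Perm (Fin n), Antitone (f ∘ σ) :=
  ⟨Tuple.sort (OrderDual.toDual ∘ f), monotone_toDual_comp_iff.1 (Tuple.monotone_sort _)⟩

theorem antitone_comp_succ_of_succ_le {α : Type*} [Preorder α] {r : ℕ} {f : ℕ → α}
    (hf : ∀ i, 1 ≤ i → i < r → f (i + 1) ≤ f i) : Antitone fun k : Fin r => f (k + 1) := by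
  intro a b hab
  have key : ∀ n, (a : ℕ) ≤ n → n < r → f (n + 1) ≤ f (a + 1) := by
    intro n han
    induction n, han using Nat.le_induction with
    | base => exact fun _ => le_rfl
    | succ n _ ih => exact fun hn => (hf (n + 1) (by omega) hn).trans (ih (by omega))
  exact key b hab b.isLt

theorem dotProduct_le_norm_mul_sum_abs {ι : Type*} [Fintype ι] (z y : ι → ℝ) :
    z ⬝ᵥ y ≤ ‖z‖ * ∑ k, |y k| := by
  rw [mul_sum]
  refine sum_le_sum fun k _ => ?_
  calc z k * y k ≤ |z k| * |y k| := by rw [← abs_mul]; exact le_abs_self _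
    _ ≤ ‖z‖ * |y k| := by
      gcongr
      simpa using norm_le_pi_norm z k

theorem dotProduct_le_dotProduct_abs_comp_perm {ι : Type*} [Fintype ι] [LinearOrder ι]
    {f y : ι → ℝ} {σ : Equiv.Perm ι} (hf : Antitone f) (hf0 : 0 ≤ f)
    (hσ : Antitone fun j => |y (σ j)|) : f ⬝ᵥ y ≤ f ⬝ᵥ fun j => |y (σ j)| :=
  calc f ⬝ᵥ y ≤ ∑ k, f k * |y k| :=
        sum_le_sum fun k _ => mul_le_mul_of_nonneg_left (le_abs_self _) (hf0 k)
    _ = ∑ k, f k * |y (σ (σ.symm k))| := by simp only [Equiv.apply_symm_apply]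
    _ ≤ f ⬝ᵥ fun j => |y (σ j)| := (hf.monovary hσ).sum_mul_comp_perm_le_sum_mul

section SignedPerms

variable {ι : Type*}

def signedPerms (v : ι → ℝ) : Set (ι → ℝ) :=
  {w | ∃ σ : Equiv.Perm ι, ∃ ε : ι → ℝ, (∀ k, ε k = 1 ∨ ε k = -1) ∧ w = fun k => ε k * v (σ k)}

theorem signedPerms_finite [Finite ι] (v : ι → ℝ) : (signedPerms v).Finite := by
  refine (Set.Finite.pi fun _ => (Set.finite_range v).union (Set.finite_range (-v))).subset ?_
  rintro _ ⟨σ, ε, hε, rfl⟩ k -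
  rcases hε k with h | h <;> simp [h]

theorem exists_mem_signedPerms_dotProduct_eq [Fintype ι] (v y : ι → ℝ) (σ : Equiv.Perm ι) :
    ∃ w ∈ signedPerms v, w ⬝ᵥ y = ∑ j, v j * |y (σ j)| := by
  refine ⟨fun k => (if 0 ≤ y k then 1 else -1) * v (σ.symm k),
    ⟨σ.symm, _, fun k => by split_ifs <;> simp, rfl⟩, ?_⟩
  calc _ = ∑ k, v (σ.symm k) * |y k| := sum_congr rfl fun k _ => by
        dsimp only
        split_ifs with h
        · rw [abs_of_nonneg h]; ring
        · rw [abs_of_neg (not_le.1 h)]; ring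
    _ = ∑ j, v j * |y (σ j)| := by
        rw [← Equiv.sum_comp σ]
        simp only [Equiv.symm_apply_apply]

end SignedPerms

section SimpleRoots

variable {r : ℕ}

theorem stdVec_succ (k : Fin r) : stdVec r (k + 1) = Pi.single k 1 := by
  ext j
  simp [stdVec, Pi.single_apply, Fin.ext_iff]

theorem stdVec_eq_zero_of_lt {i : ℕ} (h : r < i) : stdVec r i = 0 := by
  ext k
  simp only [stdVec, Pi.zero_apply, ite_eq_right_iff, one_ne_zero]
  omega

theorem simpleRootB_eq_sub (i : ℕ) :
    simpleRootB r i = stdVec r i - stdVec r (i + 1) := by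
  unfold simpleRootB
  split_ifs with h
  · rw [stdVec_eq_zero_of_lt (i := i + 1) (by omega), sub_zero, h]
  · rfl

theorem sum_simpleRootB (hr : 1 ≤ r) : ∑ i ∈ Icc 1 r, simpleRootB r i = stdVec r 1 := by
  simp only [simpleRootB_eq_sub, ← neg_sub (stdVec r (_ + 1)), sum_neg_distrib, sum_Icc_sub hr,
    stdVec_eq_zero_of_lt (lt_add_one r), neg_neg, sub_zero, zero_add]

theorem simpleRootB_dotProduct_nonneg {d : Fin r → ℝ} (hd : Antitone d) (hd0 : 0 ≤ d) {i : ℕ}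
    (hi : 1 ≤ i) (hir : i ≤ r) : 0 ≤ simpleRootB r i ⬝ᵥ d := by
  obtain ⟨k, rfl⟩ : ∃ k : Fin r, (k : ℕ) + 1 = i := ⟨⟨i - 1, by omega⟩, by simp only; omega⟩
  rw [simpleRootB_eq_sub, sub_dotProduct, stdVec_succ, single_dotProduct, one_mul]
  rcases lt_or_eq_of_le hir with hlt | heq
  · rw [stdVec_succ ⟨k + 1, hlt⟩, single_dotProduct, one_mul, sub_nonneg]
    exact hd (Fin.mk_le_mk.2 k.val.le_succ)
  · rw [stdVec_eq_zero_of_lt (by omega), zero_dotProduct, sub_zero]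
    exact hd0 k

theorem norm_le_stdVec_one_dotProduct {d : Fin r → ℝ} (hd : Antitone d) (hd0 : 0 ≤ d) :
    ‖d‖ ≤ stdVec r 1 ⬝ᵥ d := by
  refine (pi_norm_le_iff_of_nonneg ?_).2 fun k => ?_
  · exact sum_nonneg fun k _ => mul_nonneg (by unfold stdVec; split_ifs <;> norm_num) (hd0 k)
  · rw [← zero_add 1, ← Fin.val_mk k.pos, stdVec_succ, single_dotProduct, one_mul,
      Real.norm_eq_abs, abs_of_nonneg (hd0 k)]
    exact hd (Nat.zero_le k)

theorem mul_norm_le_sum_smul_simpleRootB_dotProduct (hr : 1 ≤ r) {c : ℕ → ℝ} {m : ℝ} (hm : 0 ≤ m)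
    (hcm : ∀ i ∈ Icc 1 r, m ≤ c i) {d : Fin r → ℝ} (hd : Antitone d) (hd0 : 0 ≤ d) :
    m * ‖d‖ ≤ (∑ i ∈ Icc 1 r, c i • simpleRootB r i) ⬝ᵥ d :=
  calc m * ‖d‖ ≤ m * (stdVec r 1 ⬝ᵥ d) := by gcongr; exact norm_le_stdVec_one_dotProduct hd hd0
    _ = ∑ i ∈ Icc 1 r, m * (simpleRootB r i ⬝ᵥ d) := by
        rw [← sum_simpleRootB hr, sum_dotProduct, mul_sum]
    _ ≤ ∑ i ∈ Icc 1 r, c i * (simpleRootB r i ⬝ᵥ d) := sum_le_sum fun i hi => by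
        rw [mem_Icc] at hi
        exact mul_le_mul_of_nonneg_right (hcm i (mem_Icc.2 hi))
          (simpleRootB_dotProduct_nonneg hd hd0 hi.1 hi.2)
    _ = (∑ i ∈ Icc 1 r, c i • simpleRootB r i) ⬝ᵥ d := by
        simp only [sum_dotProduct, smul_dotProduct, smul_eq_mul]

end SimpleRoots

theorem exists_mem_signedPerms_dotProduct_le {r : ℕ} (hr : 1 ≤ r) {lam mu : Fin r → ℝ}
    (hmu : Antitone mu) (hmu0 : 0 ≤ mu) {c : ℕ → ℝ} {m : ℝ} (hm : 0 ≤ m)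
    (hcm : ∀ i ∈ Icc 1 r, m ≤ c i) (hdiff : lam - mu = ∑ i ∈ Icc 1 r, c i • simpleRootB r i)
    {x : Fin r → ℝ} (hx : x ∈ Metric.ball mu (m / r)) (y : Fin r → ℝ) :
    ∃ w ∈ signedPerms lam, x ⬝ᵥ y ≤ w ⬝ᵥ y := by
  obtain ⟨σ, hσ⟩ := exists_perm_antitone_comp fun k => |y k|
  obtain ⟨w, hw, hwy⟩ := exists_mem_signedPerms_dotProduct_eq lam y σ
  set d : Fin r → ℝ := fun j => |y (σ j)|
  have hperturb : (x - mu) ⬝ᵥ y ≤ m * ‖d‖ :=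
    calc (x - mu) ⬝ᵥ y ≤ ‖x - mu‖ * ∑ j, d j := by
          rw [Equiv.sum_comp σ fun k => |y k|]
          exact dotProduct_le_norm_mul_sum_abs _ _
      _ ≤ m / r * (r * ‖d‖) := by
          gcongr
          · exact (mem_ball_iff_norm.1 hx).le
          · calc ∑ j, d j ≤ ∑ _j : Fin r, ‖d‖ :=
                  sum_le_sum fun j _ => (le_abs_self _).trans (norm_le_pi_norm d j)
              _ = r * ‖d‖ := by simp
      _ = m * ‖d‖ := by field_simp
  refine ⟨w, hw, ?_⟩
  calc x ⬝ᵥ y = mu ⬝ᵥ y + (x - mu) ⬝ᵥ y := by rw [sub_dotProduct]; ring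
    _ ≤ mu ⬝ᵥ d + m * ‖d‖ :=
        add_le_add (dotProduct_le_dotProduct_abs_comp_perm hmu hmu0 hσ) hperturb
    _ ≤ mu ⬝ᵥ d + (lam - mu) ⬝ᵥ d := by
        rw [hdiff]
        gcongr
        exact mul_norm_le_sum_smul_simpleRootB_dotProduct hr hm hcm hσ fun j => abs_nonneg _
    _ = w ⬝ᵥ y := by rw [hwy, sub_dotProduct, add_sub_cancel]; rfl

theorem dominant_weight_mem_interior_weight_polytope_general
    (r : ℕ) (hr : 1 ≤ r) (lam mu : ℕ → ℝ)
    (hmu_dec : ∀ i, 1 ≤ i → i < r → mu (i + 1) ≤ mu i) (hmu_nonneg : 0 ≤ mu r)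
    (c : ℕ → ℝ) (hc : ∀ i, 1 ≤ i → i ≤ r → 0 < c i)
    (hdiff : (fun k : Fin r => lam ((k : ℕ) + 1) - mu ((k : ℕ) + 1)) =
      ∑ i ∈ Finset.Icc 1 r, c i • simpleRootB r i) :
    (fun k : Fin r => mu ((k : ℕ) + 1)) ∈
      interior (convexHull ℝ
        {w : Fin r → ℝ | ∃ σ : Equiv.Perm (Fin r), ∃ ε : Fin r → ℝ,
          (∀ k, ε k = 1 ∨ ε k = -1) ∧ w = fun k => ε k * lam ((σ k : ℕ) + 1)}) := by
  set lamv : Fin r → ℝ := fun k => lam (k + 1)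
  set muv : Fin r → ℝ := fun k => mu (k + 1)
  change muv ∈ interior (convexHull ℝ (signedPerms lamv))
  have hmuv_anti : Antitone muv := antitone_comp_succ_of_succ_le hmu_dec
  have hmuv_nonneg : 0 ≤ muv := fun k => by
    have := hmuv_anti (show k ≤ ⟨r - 1, by omega⟩ from Nat.le_sub_one_of_lt k.isLt)
    simp only [muv, Nat.sub_add_cancel hr] at this
    exact hmu_nonneg.trans this
  obtain ⟨i₀, hi₀, hmin⟩ := (Icc 1 r).exists_min_image c (nonempty_Icc.2 hr)
  have hm : 0 < c i₀ := hc i₀ (mem_Icc.1 hi₀).1 (mem_Icc.1 hi₀).2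
  refine mem_interior.2 ⟨Metric.ball muv (c i₀ / r), fun x hx => ?_, Metric.isOpen_ball,
    Metric.mem_ball_self (by positivity)⟩
  exact mem_convexHull_of_forall_exists_dotProduct_le (signedPerms_finite lamv)
    (exists_mem_signedPerms_dotProduct_le hr hmuv_anti hmuv_nonneg hm.le hmin hdiff hx)

/-- **Interior of the weight polytope (hyperoctahedral case).**
Let `λ_1 ≥ … ≥ λ_r ≥ 0` and `μ_1 ≥ … ≥ μ_r ≥ 0` with `λ − μ = ∑ c_i α_i`, all `c_i > 0`,
where `α_i = e_i − e_{i+1}` for `i < r` and `α_r = e_r`.  Then `μ` lies in the topological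
interior of the convex hull of all signed permutations of `λ`. -/
theorem dominant_weight_mem_interior_weight_polytope
    (r : ℕ) (hr : 1 ≤ r) (lam mu : ℕ → ℝ)
    (hlam_dec : ∀ i, 1 ≤ i → i < r → lam (i + 1) ≤ lam i) (hlam_nonneg : 0 ≤ lam r)
    (hmu_dec : ∀ i, 1 ≤ i → i < r → mu (i + 1) ≤ mu i) (hmu_nonneg : 0 ≤ mu r)
    (c : ℕ → ℝ) (hc : ∀ i, 1 ≤ i → i ≤ r → 0 < c i)
    (hdiff : (fun k : Fin r => lam ((k : ℕ) + 1) - mu ((k : ℕ) + 1)) =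
      ∑ i ∈ Finset.Icc 1 r, c i • simpleRootB r i) :
    (fun k : Fin r => mu ((k : ℕ) + 1)) ∈
      interior (convexHull ℝ
        {w : Fin r → ℝ | ∃ σ : Equiv.Perm (Fin r), ∃ ε : Fin r → ℝ,
          (∀ k, ε k = 1 ∨ ε k = -1) ∧ w = fun k => ε k * lam ((σ k : ℕ) + 1)}) :=
  dominant_weight_mem_interior_weight_polytope_general r hr lam mu hmu_dec hmu_nonneg c hc hdiff
end
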